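/- arXiv:2110.02422 — 8 statements merged into one kernel-verified Lean document; each statement's English description precedes it below -/
import Mathlib

section
/- Let $B \geq 1$ and let $T_0, T_1, \dots, T_B$ be exchangeable real-valued random variables such that ties among them occur with probability zero. Define $p = \frac{1}{B+1}\left(1 + \#\{b \in \{1,\dots,B\} : T_0 \leq T_b\}\right)$. Then for every $\alpha \in [0,1]$, $\mathbb{P}(p \leq \alpha) \leq \alpha$. -/
/-!
Under exchangeability all the events `{rank of T i among T 0, …, T B is at most k}` have the
same probability, and when there are no ties exactly `k` of them occur, so each has probability
`k / (B + 1)`. With `k = ⌊α (B + 1)⌋`, the event `{p ≤ α}` is the one for `i = 0`.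
-/

open MeasureTheory Finset
open scoped Classical ENNReal

section

variable {ι : Type*} [Fintype ι]

def descRank {α : Type*} [LinearOrder α] (x : ι → α) (i : ι) : ℕ := #{j | x i ≤ x j}

section Rank

variable {α : Type*} [LinearOrder α]

lemma descRank_comp_perm (x : ι → α) (σ : Equiv.Perm ι) (i : ι) :
    descRank (x ∘ σ) i = descRank x (σ i) :=
  card_equiv σ (by simp)

lemma descRank_eq_one_add [DecidableEq ι] (x : ι → α) (i : ι) :
    descRank x i = 1 + #{j | j ≠ i ∧ x i ≤ x j} := by
  rw [descRank, add_comm,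
    ← card_insert_of_notMem (a := i) (s := {j | j ≠ i ∧ x i ≤ x j}) (by simp)]
  congr 1
  ext j
  by_cases h : j = i <;> simp [h]

lemma descRank_mem_Icc (x : ι → α) (i : ι) : descRank x i ∈ Icc 1 (Fintype.card ι) :=
  mem_Icc.2 ⟨card_pos.2 ⟨i, by simp⟩, card_filter_le _ _⟩

lemma descRank_lt_of_lt {x : ι → α} {i i' : ι} (h : x i < x i') :
    descRank x i' < descRank x i := by
  refine card_lt_card <| (ssubset_iff_of_subset fun j hj => ?_).2 ⟨i, by simpa using h⟩
  simp only [mem_filter, mem_univ, true_and] at hj ⊢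
  exact h.le.trans hj

lemma descRank_injective {x : ι → α} (hx : Function.Injective x) :
    Function.Injective (descRank x) := by
  intro i i' h
  by_contra hne
  rcases (hx.ne hne).lt_or_gt with hlt | hlt
  · exact (descRank_lt_of_lt hlt).ne h.symm
  · exact (descRank_lt_of_lt hlt).ne h

lemma image_descRank {x : ι → α} (hx : Function.Injective x) :
    univ.image (descRank x) = Icc 1 (Fintype.card ι) :=
  eq_of_subset_of_card_le
    (fun _ hm => by
      obtain ⟨i, -, rfl⟩ := mem_image.1 hm
      exact descRank_mem_Icc x i)
    (by simp [card_image_of_injective _ (descRank_injective hx)])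

lemma card_descRank_le {x : ι → α} (hx : Function.Injective x) {k : ℕ}
    (hk : k ≤ Fintype.card ι) : #{i | descRank x i ≤ k} = k := by
  rw [← card_image_of_injective _ (descRank_injective hx),
    ← filter_image (p := (· ≤ k)), image_descRank hx]
  have : {m ∈ Icc 1 (Fintype.card ι) | m ≤ k} = Icc 1 k := by
    ext m
    simp only [mem_filter, mem_Icc]
    omega
  simp [this]

end Rank

section Measure

variable {Ω : Type*} [MeasurableSpace Ω] {μ : Measure Ω}

lemma sum_measure_eq_lintegral_card {A : ι → Set Ω} (hA : ∀ i, MeasurableSet (A i)) :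
    ∑ i, μ (A i) = ∫⁻ ω, (#{i | ω ∈ A i} : ℝ≥0∞) ∂μ := by
  simp_rw [← lintegral_indicator_one (hA _)]
  rw [← lintegral_finsetSum _ fun i _ => measurable_one.indicator (hA i)]
  congr with ω
  simp [Set.indicator_apply, sum_boole]

lemma card_mul_measure_eq_of_ae_card_eq [IsProbabilityMeasure μ] {A : ι → Set Ω}
    (hA : ∀ i, MeasurableSet (A i)) {i₀ : ι} (heq : ∀ i, μ (A i) = μ (A i₀)) {k : ℕ}
    (hcount : ∀ᵐ ω ∂μ, #{i | ω ∈ A i} = k) :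
    Fintype.card ι * μ (A i₀) = k := by
  calc (Fintype.card ι : ℝ≥0∞) * μ (A i₀) = ∑ i, μ (A i) := by simp [heq]
    _ = ∫⁻ ω, (#{i | ω ∈ A i} : ℝ≥0∞) ∂μ := sum_measure_eq_lintegral_card hA
    _ = ∫⁻ _, (k : ℝ≥0∞) ∂μ := lintegral_congr_ae (hcount.mono fun ω h => by simp only [h])
    _ = k := by simp

variable {α : Type*} [LinearOrder α] [TopologicalSpace α] [OrderClosedTopology α]
  [SecondCountableTopology α] [MeasurableSpace α] [OpensMeasurableSpace α]

lemma measurable_descRank (i : ι) : Measurable fun x : ι → α => descRank x i := by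
  simp only [descRank, card_filter]
  exact Finset.measurable_sum _ fun j _ => Measurable.ite
    (measurableSet_le (measurable_pi_apply i) (measurable_pi_apply j)) measurable_const
    measurable_const

lemma measure_descRank_le_eq {X : Ω → ι → α} (hX : Measurable X)
    (hexch : ∀ σ : Equiv.Perm ι, μ.map (fun ω => X ω ∘ σ) = μ.map X) (k : ℕ) (i j : ι) :
    μ {ω | descRank (X ω) j ≤ k} = μ {ω | descRank (X ω) i ≤ k} := by
  have hS : MeasurableSet {x : ι → α | descRank x i ≤ k} :=
    measurableSet_le (measurable_descRank i) measurable_const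
  have hswap : {ω | descRank (X ω) j ≤ k} =
      (fun ω => X ω ∘ Equiv.swap i j) ⁻¹' {x | descRank x i ≤ k} := by
    ext ω
    simp [descRank_comp_perm]
  rw [hswap, ← Measure.map_apply (by fun_prop) hS, hexch, Measure.map_apply hX hS]
  rfl

lemma measure_descRank_le [IsProbabilityMeasure μ] {X : Ω → ι → α} (hX : Measurable X)
    (hexch : ∀ σ : Equiv.Perm ι, μ.map (fun ω => X ω ∘ σ) = μ.map X)
    (hinj : ∀ᵐ ω ∂μ, Function.Injective (X ω)) {k : ℕ} (hk : k ≤ Fintype.card ι) (i : ι) :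
    μ {ω | descRank (X ω) i ≤ k} = k / Fintype.card ι := by
  have : Nonempty ι := ⟨i⟩
  rw [ENNReal.eq_div_iff (by simp) (ENNReal.natCast_ne_top _)]
  exact card_mul_measure_eq_of_ae_card_eq (A := fun j => {ω | descRank (X ω) j ≤ k})
    (fun j => measurableSet_le ((measurable_descRank j).comp hX) measurable_const)
    (fun j => measure_descRank_le_eq hX hexch k i j)
    (hinj.mono fun ω hω => by simpa only [Set.mem_ofPred_eq] using card_descRank_le hω hk)

end Measure

end

lemma Nat.cast_div_le_iff_le_floor {K : Type*} [Field K] [LinearOrder K] [IsStrictOrderedRing K]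
    [FloorSemiring K] {m n : ℕ} (hn : 0 < n) {a : K} (ha : 0 ≤ a) :
    (m : K) / n ≤ a ↔ m ≤ ⌊a * n⌋₊ := by
  rw [div_le_iff₀ (by exact_mod_cast hn), Nat.le_floor_iff (by positivity)]

theorem crt_pvalue_superuniform_general
    {Ω : Type*} [MeasurableSpace Ω] (μ : Measure Ω) [IsProbabilityMeasure μ]
    (B : ℕ) (T : Fin (B + 1) → Ω → ℝ)
    (hmeas : ∀ i, Measurable (T i))
    (hexch : ∀ σ : Equiv.Perm (Fin (B + 1)),
      Measure.map (fun ω => fun i => T (σ i) ω) μ =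
        Measure.map (fun ω => fun i => T i ω) μ)
    (hties : μ {ω | ∃ i j : Fin (B + 1), i ≠ j ∧ T i ω = T j ω} = 0)
    (p : Ω → ℝ)
    (hp : ∀ ω, p ω =
      (1 + ((Finset.univ.filter
        (fun b : Fin (B + 1) => b ≠ 0 ∧ T 0 ω ≤ T b ω)).card : ℝ)) / (B + 1)) :
    ∀ α ∈ Set.Icc (0 : ℝ) 1, μ {ω | p ω ≤ α} ≤ ENNReal.ofReal α := by
  rintro α ⟨hα0, hα1⟩
  set k := ⌊α * (B + 1 : ℕ)⌋₊
  have hk : k ≤ Fintype.card (Fin (B + 1)) := by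
    rw [Fintype.card_fin, ← Nat.floor_natCast (R := ℝ) (B + 1)]
    exact Nat.floor_le_floor (mul_le_of_le_one_left (Nat.cast_nonneg _) hα1)
  have hevent : {ω | p ω ≤ α} = {ω | descRank (fun i => T i ω) 0 ≤ k} := by
    ext ω
    rw [Set.mem_ofPred_eq, Set.mem_ofPred_eq, descRank_eq_one_add,
      ← Nat.cast_div_le_iff_le_floor B.succ_pos hα0, hp]
    push_cast
    rfl
  have hinj : ∀ᵐ ω ∂μ, Function.Injective fun i => T i ω := by
    refine measure_mono_null (fun ω hω => ?_) hties
    obtain ⟨i, j, hij, hne⟩ : ∃ i j, T i ω = T j ω ∧ i ≠ j := by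
      simpa [Function.Injective] using hω
    exact ⟨i, j, hne, hij⟩
  rw [hevent, measure_descRank_le (measurable_pi_lambda _ hmeas) hexch hinj hk]
  refine ENNReal.div_le_of_le_mul ?_
  rw [Fintype.card_fin, ← ENNReal.ofReal_natCast (B + 1), ← ENNReal.ofReal_mul hα0,
    ← ENNReal.ofReal_natCast k]
  exact ENNReal.ofReal_le_ofReal (Nat.floor_le (by positivity))

/-- Validity of the CRT p-value: if `T 0, T 1, ..., T B` are exchangeable real random
variables with no ties a.s., then the p-value
`p = (1 + #{b ≥ 1 : T 0 ≤ T b}) / (B+1)` is super-uniform. -/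
theorem crt_pvalue_superuniform
    {Ω : Type*} [MeasurableSpace Ω] (μ : Measure Ω) [IsProbabilityMeasure μ]
    (B : ℕ) (hB : 1 ≤ B) (T : Fin (B + 1) → Ω → ℝ)
    (hmeas : ∀ i, Measurable (T i))
    (hexch : ∀ σ : Equiv.Perm (Fin (B + 1)),
      Measure.map (fun ω => fun i => T (σ i) ω) μ =
        Measure.map (fun ω => fun i => T i ω) μ)
    (hties : μ {ω | ∃ i j : Fin (B + 1), i ≠ j ∧ T i ω = T j ω} = 0)
    (p : Ω → ℝ)
    (hp : ∀ ω, p ω =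
      (1 + ((Finset.univ.filter
        (fun b : Fin (B + 1) => b ≠ 0 ∧ T 0 ω ≤ T b ω)).card : ℝ)) / (B + 1)) :
    ∀ α ∈ Set.Icc (0 : ℝ) 1, μ {ω | p ω ≤ α} ≤ ENNReal.ofReal α :=
  crt_pvalue_superuniform_general μ B T hmeas hexch hties p hp
end

section
/- Fix $c, q \in (0,1)$ with $(1-c)q < c$, and p-values $p_1, \dots, p_m$. Let $\hat{k}$ be the Selective SeqStep+ threshold index (as defined by the SeqStep+ rule with parameters $c, q$, with $\hat{k} = 0$ if no valid $k$ exists). Then for every index $j$, $\frac{\mathbf{1}\{j \leq \hat{k}\}}{\#\{i \leq \hat{k} : p_i \leq c\} \vee 1} \leq \frac{1 + \frac{1-c}{c} q}{1 + j}$. -/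
open scoped Classical

/-!
Write `A` and `B` for the numbers of p-values `≤ c` and `> c` among the first `k̂`, so that
`A + B = k̂`, and `M = max A 1`. If `j ≤ k̂`, the SeqStep+ condition at `k̂` gives
`1 + B ≤ (1-c)/c · q · M`, hence `1 + j ≤ 1 + A + B ≤ (1 + (1-c)/c · q) · M`.
If `j > k̂` the left-hand side is `0`.
-/

theorem Finset.card_filter_le_add_card_filter_lt {α β : Type*} [LinearOrder β]
    (s : Finset α) (f : α → β) (c : β) :
    (s.filter (fun i => f i ≤ c)).card + (s.filter (fun i => c < f i)).card = s.card := by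
  simpa only [not_le] using Finset.card_filter_add_card_filter_not (s := s) (fun i => f i ≤ c)

theorem one_div_max_one_le_of_ratio_le {a b j : ℕ} {r : ℝ} (hj : j ≤ a + b)
    (h : (1 + (b : ℝ)) / max (a : ℝ) 1 ≤ r) :
    1 / max (a : ℝ) 1 ≤ (1 + r) / (1 + j) := by
  have hM : (0 : ℝ) < max (a : ℝ) 1 := one_pos.trans_le (le_max_right _ _)
  have hb : 1 + (b : ℝ) ≤ r * max (a : ℝ) 1 := (div_le_iff₀ hM).mp h
  have hj' : (j : ℝ) ≤ a + b := by exact_mod_cast hj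
  rw [div_le_div_iff₀ hM (by positivity)]
  linarith [le_max_left (a : ℝ) 1]

theorem seqstep_indicator_ratio_bound_general
    (c q : ℝ) (hc : c ∈ Set.Ioo (0 : ℝ) 1) (hq : q ∈ Set.Ioo (0 : ℝ) 1)
    (p : ℕ → ℝ)
    (khat : ℕ)
    (hmem : khat = 0 ∨
      (1 + (((Finset.Icc 1 khat).filter (fun i => c < p i)).card : ℝ)) /
          max (((Finset.Icc 1 khat).filter (fun i => p i ≤ c)).card : ℝ) 1 ≤
        (1 - c) / c * q) :
    ∀ j : ℕ, 1 ≤ j →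
      (if j ≤ khat then (1 : ℝ) else 0) /
          max (((Finset.Icc 1 khat).filter (fun i => p i ≤ c)).card : ℝ) 1 ≤
        (1 + (1 - c) / c * q) / (1 + (j : ℝ)) := by
  intro j hj
  split_ifs with hjk
  · apply one_div_max_one_le_of_ratio_le _ (hmem.resolve_left (by omega))
    rw [Finset.card_filter_le_add_card_filter_lt, Nat.card_Icc]
    omega
  · have hr : 0 ≤ (1 - c) / c * q :=
      mul_nonneg (div_nonneg (sub_nonneg.mpr hc.2.le) hc.1.le) hq.1.le
    rw [zero_div]
    positivity

/-- Deterministic key bound for FDR control under arbitrary dependence: for the Selective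
SeqStep+ threshold `k̂` (with `k̂ = 0` if no valid `k` exists), for every index `j ≥ 1`,
`1{j ≤ k̂} / (#{i ≤ k̂ : p_i ≤ c} ∨ 1) ≤ (1 + (1-c)q/c) / (1 + j)`. -/
theorem seqstep_indicator_ratio_bound
    (c q : ℝ) (hc : c ∈ Set.Ioo (0 : ℝ) 1) (hq : q ∈ Set.Ioo (0 : ℝ) 1)
    (hcq : (1 - c) * q < c)
    (m : ℕ) (p : ℕ → ℝ) (hpv : ∀ j, p j ∈ Set.Icc (0 : ℝ) 1)
    (khat : ℕ) (hkm : khat ≤ m)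
    (hmem : khat = 0 ∨
      (1 + (((Finset.Icc 1 khat).filter (fun i => c < p i)).card : ℝ)) /
          max (((Finset.Icc 1 khat).filter (fun i => p i ≤ c)).card : ℝ) 1 ≤
        (1 - c) / c * q)
    (hmax : ∀ k, 1 ≤ k → k ≤ m →
      (1 + (((Finset.Icc 1 k).filter (fun i => c < p i)).card : ℝ)) /
          max (((Finset.Icc 1 k).filter (fun i => p i ≤ c)).card : ℝ) 1 ≤
        (1 - c) / c * q → k ≤ khat) :
    ∀ j : ℕ, 1 ≤ j →
      (if j ≤ khat then (1 : ℝ) else 0) /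
          max (((Finset.Icc 1 khat).filter (fun i => p i ≤ c)).card : ℝ) 1 ≤
        (1 + (1 - c) / c * q) / (1 + (j : ℝ)) :=
  seqstep_indicator_ratio_bound_general c q hc hq p khat hmem
end

section
/- Fix real numbers $1 > \alpha > c > 0$ and $\sigma > 0$ with $c - \sigma^2/(\alpha - c) \geq 0$. The optimal value of: maximize $\sum_{i=1}^3 \pi_i \frac{x_i}{1 - x_i}$ over $\pi_i \geq 0$, $x_i \in [0, \alpha]$ subject to $\sum_i \pi_i = 1$, $\sum_i \pi_i x_i = c$, $\sum_i \pi_i (x_i - c)^2 = \sigma^2$, equals $\frac{\alpha}{1-\alpha} - \frac{(\alpha - c)^2}{(1-\alpha)(\sigma^2 + (1-c)(\alpha - c))}$, achieved by $x_1 = c - \frac{\sigma^2}{\alpha - c}$, $x_2 = \alpha$, $\pi_1 = \frac{(\alpha-c)^2}{(\alpha-c)^2 + \sigma^2}$, $\pi_2 = \frac{\sigma^2}{(\alpha-c)^2 + \sigma^2}$, $\pi_3 = 0$. -/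
/-!
On `(-∞, α]` the convex function `x / (1 - x)` lies below the quadratic `q` that is tangent to it
at `x₁ = c - σ² / (α - c)` and meets it at `α`: the difference is
`(x - x₁)² (α - x) / ((1 - x₁)² (1 - α) (1 - x))`. The mean of `q` under any weights depends only
on their mean `c` and variance `σ²`, so it bounds the objective, with equality exactly for weights
carried by `{x₁, α}`; the choice of `x₁` is what makes such a two-point distribution have mean `c`
and variance `σ²`.
-/

open Finset

/-- The quadratic touching `x / (1 - x)` at `a` and meeting it at `b`: Hermite interpolation at
`a, a, b`, using that the divided differences of `1 / (1 - x)` are `1 / ∏ (1 - xᵢ)`. -/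
noncomputable def osculatingQuadratic (a b x : ℝ) : ℝ :=
  a / (1 - a) + (x - a) / (1 - a) ^ 2 + (x - a) ^ 2 / ((1 - a) ^ 2 * (1 - b))

theorem div_one_sub_sub_osculatingQuadratic {a b x : ℝ} (ha : a ≠ 1) (hb : b ≠ 1) (hx : x ≠ 1) :
    x / (1 - x) - osculatingQuadratic a b x =
      (x - a) ^ 2 * (x - b) / ((1 - a) ^ 2 * (1 - b) * (1 - x)) := by
  have ha' : 1 - a ≠ 0 := sub_ne_zero.2 ha.symm
  have hb' : 1 - b ≠ 0 := sub_ne_zero.2 hb.symm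
  have hx' : 1 - x ≠ 0 := sub_ne_zero.2 hx.symm
  unfold osculatingQuadratic
  field_simp
  ring

theorem div_one_sub_le_osculatingQuadratic {a b x : ℝ} (ha : a ≠ 1) (hb : b < 1) (hxb : x ≤ b) :
    x / (1 - x) ≤ osculatingQuadratic a b x := by
  have hx : x < 1 := hxb.trans_lt hb
  have key := div_one_sub_sub_osculatingQuadratic ha hb.ne hx.ne
  have : (x - a) ^ 2 * (x - b) / ((1 - a) ^ 2 * (1 - b) * (1 - x)) ≤ 0 :=
    div_nonpos_of_nonpos_of_nonneg
      (mul_nonpos_of_nonneg_of_nonpos (sq_nonneg _) (by linarith))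
      (by have := sub_pos.2 hb; have := sub_pos.2 hx; positivity)
  linarith

theorem div_one_sub_eq_osculatingQuadratic {a b x : ℝ} (ha : a ≠ 1) (hb : b ≠ 1)
    (hx : x = a ∨ x = b) : x / (1 - x) = osculatingQuadratic a b x := by
  have hx1 : x ≠ 1 := by rcases hx with rfl | rfl <;> assumption
  have key := div_one_sub_sub_osculatingQuadratic ha hb hx1
  rcases hx with rfl | rfl <;> simp at key <;> linarith

section Moments

variable {ι : Type*} {s : Finset ι} {π x : ι → ℝ} {a b c v : ℝ}

theorem sum_mul_osculatingQuadratic (h₀ : ∑ i ∈ s, π i = 1)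
    (h₁ : ∑ i ∈ s, π i * x i = c) (h₂ : ∑ i ∈ s, π i * (x i - c) ^ 2 = v) :
    ∑ i ∈ s, π i * osculatingQuadratic a b (x i) =
      osculatingQuadratic a b c + v / ((1 - a) ^ 2 * (1 - b)) := by
  set K := (1 - a) ^ 2 * (1 - b)
  have hexp : ∀ i, π i * osculatingQuadratic a b (x i) =
      (osculatingQuadratic a b c - (c / (1 - a) ^ 2 + 2 * (c - a) * c / K)) * π i +
        (1 / (1 - a) ^ 2 + 2 * (c - a) / K) * (π i * x i) + 1 / K * (π i * (x i - c) ^ 2) := by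
    intro i
    unfold osculatingQuadratic
    ring
  simp only [hexp, sum_add_distrib, ← mul_sum, h₀, h₁, h₂]
  ring

theorem sum_mul_div_one_sub_le (ha : a ≠ 1) (hb : b < 1) (hπ : ∀ i ∈ s, 0 ≤ π i)
    (hx : ∀ i ∈ s, x i ≤ b) (h₀ : ∑ i ∈ s, π i = 1) (h₁ : ∑ i ∈ s, π i * x i = c)
    (h₂ : ∑ i ∈ s, π i * (x i - c) ^ 2 = v) :
    ∑ i ∈ s, π i * (x i / (1 - x i)) ≤
      osculatingQuadratic a b c + v / ((1 - a) ^ 2 * (1 - b)) := by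
  rw [← sum_mul_osculatingQuadratic h₀ h₁ h₂]
  exact sum_le_sum fun i hi ↦
    mul_le_mul_of_nonneg_left (div_one_sub_le_osculatingQuadratic ha hb (hx i hi)) (hπ i hi)

theorem sum_mul_div_one_sub_eq (ha : a ≠ 1) (hb : b ≠ 1)
    (hsupp : ∀ i ∈ s, π i = 0 ∨ x i = a ∨ x i = b) (h₀ : ∑ i ∈ s, π i = 1)
    (h₁ : ∑ i ∈ s, π i * x i = c) (h₂ : ∑ i ∈ s, π i * (x i - c) ^ 2 = v) :
    ∑ i ∈ s, π i * (x i / (1 - x i)) =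
      osculatingQuadratic a b c + v / ((1 - a) ^ 2 * (1 - b)) := by
  rw [← sum_mul_osculatingQuadratic h₀ h₁ h₂]
  refine sum_congr rfl fun i hi ↦ ?_
  rcases hsupp i hi with h | h
  · simp [h]
  · rw [div_one_sub_eq_osculatingQuadratic ha hb h]

end Moments

theorem osculatingQuadratic_add_eq {a b c : ℝ} (ha : a ≠ 1) (hb : b ≠ 1) :
    osculatingQuadratic a b c + (c - a) * (b - c) / ((1 - a) ^ 2 * (1 - b)) =
      b / (1 - b) - (b - c) / ((1 - b) * (1 - a)) := by
  have ha' : 1 - a ≠ 0 := sub_ne_zero.2 ha.symm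
  have hb' : 1 - b ≠ 0 := sub_ne_zero.2 hb.symm
  unfold osculatingQuadratic
  field_simp
  ring

section ThreePoint

variable {α c σ : ℝ}

noncomputable def extremalWeights (α c σ : ℝ) : Fin 3 → ℝ :=
  ![(α - c) ^ 2 / ((α - c) ^ 2 + σ ^ 2), σ ^ 2 / ((α - c) ^ 2 + σ ^ 2), 0]

noncomputable def extremalPoints (α c σ : ℝ) : Fin 3 → ℝ :=
  ![c - σ ^ 2 / (α - c), α, 0]

theorem extremal_moments (hcα : c < α) :
    ∑ i, extremalWeights α c σ i = 1 ∧
      ∑ i, extremalWeights α c σ i * extremalPoints α c σ i = c ∧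
      ∑ i, extremalWeights α c σ i * (extremalPoints α c σ i - c) ^ 2 = σ ^ 2 := by
  have hd : α - c ≠ 0 := (sub_pos.2 hcα).ne'
  have hE : (α - c) ^ 2 + σ ^ 2 ≠ 0 := by positivity
  simp only [extremalWeights, extremalPoints, Fin.sum_univ_three, Matrix.cons_val_zero,
    Matrix.cons_val_one, Matrix.cons_val_two, Matrix.head_cons, Matrix.tail_cons, zero_mul, add_zero]
  refine ⟨?_, ?_, ?_⟩ <;> field_simp <;> ring

theorem extremalWeights_nonneg (i : Fin 3) : 0 ≤ extremalWeights α c σ i := by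
  fin_cases i <;> simp [extremalWeights] <;> positivity

theorem extremalPoints_mem_Icc (hcα : c < α) (hx1 : 0 ≤ c - σ ^ 2 / (α - c)) (i : Fin 3) :
    extremalPoints α c σ i ∈ Set.Icc 0 α := by
  have : σ ^ 2 / (α - c) ≥ 0 := div_nonneg (sq_nonneg σ) (sub_pos.2 hcα).le
  fin_cases i <;> refine ⟨?_, ?_⟩ <;> simp [extremalPoints] <;> linarith

theorem extremalPoints_mem_support (i : Fin 3) :
    extremalWeights α c σ i = 0 ∨ extremalPoints α c σ i = c - σ ^ 2 / (α - c) ∨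
      extremalPoints α c σ i = α := by
  fin_cases i <;> simp [extremalWeights, extremalPoints]

theorem osculatingQuadratic_add_variance_eq (hα : α < 1) (hcα : c < α) :
    osculatingQuadratic (c - σ ^ 2 / (α - c)) α c +
        σ ^ 2 / ((1 - (c - σ ^ 2 / (α - c))) ^ 2 * (1 - α)) =
      α / (1 - α) - (α - c) ^ 2 / ((1 - α) * (σ ^ 2 + (1 - c) * (α - c))) := by
  set a := c - σ ^ 2 / (α - c) with ha
  have hd : α - c ≠ 0 := (sub_pos.2 hcα).ne'
  have hσ : σ ^ 2 = (c - a) * (α - c) := by rw [ha]; field_simp; ring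
  have hac : a ≤ c := sub_le_self _ (div_nonneg (sq_nonneg σ) (sub_pos.2 hcα).le)
  rw [hσ, osculatingQuadratic_add_eq (by linarith) hα.ne,
    show (c - a) * (α - c) + (1 - c) * (α - c) = (1 - a) * (α - c) by ring]
  field_simp

end ThreePoint

theorem three_point_optimization_general
    (α c σ : ℝ) (hα : α < 1) (hcα : c < α)
    (hx1 : 0 ≤ c - σ ^ 2 / (α - c)) :
    IsGreatest
      {v : ℝ | ∃ π x : Fin 3 → ℝ,
        (∀ i, 0 ≤ π i) ∧ (∀ i, 0 ≤ x i ∧ x i ≤ α) ∧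
        (∑ i, π i = 1) ∧ (∑ i, π i * x i = c) ∧
        (∑ i, π i * (x i - c) ^ 2 = σ ^ 2) ∧
        v = ∑ i, π i * (x i / (1 - x i))}
      (α / (1 - α) - (α - c) ^ 2 / ((1 - α) * (σ ^ 2 + (1 - c) * (α - c)))) ∧
    (let π : Fin 3 → ℝ :=
        ![(α - c) ^ 2 / ((α - c) ^ 2 + σ ^ 2), σ ^ 2 / ((α - c) ^ 2 + σ ^ 2), 0]
     let x : Fin 3 → ℝ := ![c - σ ^ 2 / (α - c), α, 0]
     (∑ i, π i = 1) ∧ (∑ i, π i * x i = c) ∧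
     (∑ i, π i * (x i - c) ^ 2 = σ ^ 2) ∧
     ∑ i, π i * (x i / (1 - x i)) =
       α / (1 - α) - (α - c) ^ 2 / ((1 - α) * (σ ^ 2 + (1 - c) * (α - c)))) := by
  have ha : c - σ ^ 2 / (α - c) ≠ 1 := by
    have := div_nonneg (sq_nonneg σ) (sub_pos.2 hcα).le
    linarith
  rw [← osculatingQuadratic_add_variance_eq hα hcα]
  obtain ⟨h₀, h₁, h₂⟩ := extremal_moments (σ := σ) hcα
  have hvalue := sum_mul_div_one_sub_eq ha hα.ne (fun i _ ↦ extremalPoints_mem_support i) h₀ h₁ h₂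
  refine ⟨⟨⟨extremalWeights α c σ, extremalPoints α c σ, extremalWeights_nonneg,
    extremalPoints_mem_Icc hcα hx1, h₀, h₁, h₂, hvalue.symm⟩, ?_⟩, h₀, h₁, h₂, hvalue⟩
  rintro v ⟨π, x, hπ, hx, h₀, h₁, h₂, rfl⟩
  exact sum_mul_div_one_sub_le ha hα (fun i _ ↦ hπ i) (fun i _ ↦ (hx i).2) h₀ h₁ h₂

/-- The three-point optimization lemma (Lemma A.1): the maximum of
`∑ πᵢ xᵢ/(1-xᵢ)` subject to `πᵢ ≥ 0`, `0 ≤ xᵢ ≤ α`, `∑ πᵢ = 1`, `∑ πᵢ xᵢ = c`,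
`∑ πᵢ (xᵢ - c)² = σ²` equals
`α/(1-α) - (α-c)²/((1-α)(σ² + (1-c)(α-c)))`, achieved at the indicated point. -/
theorem three_point_optimization
    (α c σ : ℝ) (hα : α < 1) (hcα : c < α) (hc : 0 < c) (hσ : 0 < σ)
    (hx1 : 0 ≤ c - σ ^ 2 / (α - c)) :
    IsGreatest
      {v : ℝ | ∃ π x : Fin 3 → ℝ,
        (∀ i, 0 ≤ π i) ∧ (∀ i, 0 ≤ x i ∧ x i ≤ α) ∧
        (∑ i, π i = 1) ∧ (∑ i, π i * x i = c) ∧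
        (∑ i, π i * (x i - c) ^ 2 = σ ^ 2) ∧
        v = ∑ i, π i * (x i / (1 - x i))}
      (α / (1 - α) - (α - c) ^ 2 / ((1 - α) * (σ ^ 2 + (1 - c) * (α - c)))) ∧
    (let π : Fin 3 → ℝ :=
        ![(α - c) ^ 2 / ((α - c) ^ 2 + σ ^ 2), σ ^ 2 / ((α - c) ^ 2 + σ ^ 2), 0]
     let x : Fin 3 → ℝ := ![c - σ ^ 2 / (α - c), α, 0]
     (∑ i, π i = 1) ∧ (∑ i, π i * x i = c) ∧
     (∑ i, π i * (x i - c) ^ 2 = σ ^ 2) ∧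
     ∑ i, π i * (x i / (1 - x i)) =
       α / (1 - α) - (α - c) ^ 2 / ((1 - α) * (σ ^ 2 + (1 - c) * (α - c)))) :=
  three_point_optimization_general α c σ hα hcα hx1
end

section
/- Fix $c, q \in (0,1)$ and integer $m \geq 1$, and set $m' = \lfloor \frac{cm}{q + c(1-q)} \rfloor$. The optimal value of: maximize $\sum_{k=0}^{m'} \pi_k \frac{k}{1 + m - k}$ over probability vectors $(\pi_0, \dots, \pi_{m'})$ (i.e., $\pi_k \geq 0$, $\sum_k \pi_k = 1$) subject to $\sum_k k \pi_k \leq cm$, is achieved by a vector supported on $\{0, m'\}$, and the optimal value is at most $\frac{c(q + c(1-q))}{q(1-c)}$. -/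
/-!
On `{0, …, m'}` every denominator `1 + m - k` is at least `1 + m - m'`, so the objective is at
most the mean divided by `1 + m - m'`, hence at most `min (c m) m' / (1 + m - m')`. The law
putting mass `t` on `m'` and `1 - t` on `0`, with `t m' = min (c m) m'`, attains this bound.
Finally `m' ≤ c m / r` with `r = q + c (1 - q)`, so `1 + m - m' > m (r - c) / r` and
`r - c = q (1 - c)`.
-/

open Finset

noncomputable def twoPoint (N : ℕ) (t : ℝ) (k : ℕ) : ℝ :=
  (if k = 0 then 1 - t else 0) + (if k = N then t else 0)

namespace twoPoint

variable {N : ℕ} {t : ℝ}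

theorem nonneg (ht₀ : 0 ≤ t) (ht₁ : t ≤ 1) (k : ℕ) : 0 ≤ twoPoint N t k := by
  unfold twoPoint
  split_ifs <;> linarith

theorem eq_zero_of_ne {k : ℕ} (hk₀ : k ≠ 0) (hkN : k ≠ N) : twoPoint N t k = 0 := by
  simp [twoPoint, hk₀, hkN]

theorem sum_mul (N : ℕ) (t : ℝ) (g : ℕ → ℝ) :
    ∑ k ∈ range (N + 1), twoPoint N t k * g k = (1 - t) * g 0 + t * g N := by
  simp only [twoPoint, add_mul, ite_mul, zero_mul, sum_add_distrib, sum_ite_eq', mem_range,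
    Nat.succ_pos, N.lt_succ_self, if_true]

theorem sum_eq_one (N : ℕ) (t : ℝ) : ∑ k ∈ range (N + 1), twoPoint N t k = 1 := by
  simpa using sum_mul N t 1

theorem mean_eq (N : ℕ) (t : ℝ) : ∑ k ∈ range (N + 1), (k : ℝ) * twoPoint N t k = t * N := by
  simpa [mul_comm] using sum_mul N t (fun k => (k : ℝ))

theorem sum_mul_div_eq (m N : ℕ) (t : ℝ) :
    ∑ k ∈ range (N + 1), twoPoint N t k * ((k : ℝ) / (1 + m - k)) = t * N / (1 + m - N) := by
  rw [sum_mul, mul_div_assoc]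
  simp

end twoPoint

theorem exists_mul_eq_min {μ : ℝ} (hμ : 0 ≤ μ) (N : ℕ) :
    ∃ t : ℝ, 0 ≤ t ∧ t ≤ 1 ∧ t * N = min μ N := by
  refine ⟨min μ N / N, by positivity, div_le_one_of_le₀ (min_le_right _ _) N.cast_nonneg, ?_⟩
  rcases eq_or_ne (N : ℝ) 0 with hN | hN
  · simp [hN, hμ]
  · exact div_mul_cancel₀ _ hN

section LinearProgram

variable {m N : ℕ} {π : ℕ → ℝ}

theorem sum_natCast_mul_le (hπ : ∀ k, 0 ≤ π k) :
    ∑ k ∈ range (N + 1), (k : ℝ) * π k ≤ N * ∑ k ∈ range (N + 1), π k := by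
  rw [mul_sum]
  refine sum_le_sum fun k hk => mul_le_mul_of_nonneg_right ?_ (hπ k)
  exact_mod_cast Nat.lt_succ_iff.mp (mem_range.mp hk)

theorem sum_mul_div_le_mean_div (hNm : N ≤ m) (hπ : ∀ k, 0 ≤ π k) :
    ∑ k ∈ range (N + 1), π k * ((k : ℝ) / (1 + m - k)) ≤
      (∑ k ∈ range (N + 1), (k : ℝ) * π k) / (1 + m - N) := by
  have hNm' : (N : ℝ) ≤ m := by exact_mod_cast hNm
  rw [sum_div]
  refine sum_le_sum fun k hk => ?_
  have hkN : (k : ℝ) ≤ N := by exact_mod_cast Nat.lt_succ_iff.mp (mem_range.mp hk)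
  rw [mul_div_assoc', mul_comm]
  gcongr
  · exact mul_nonneg k.cast_nonneg (hπ k)
  · linarith

theorem sum_mul_div_le_min_div (hNm : N ≤ m) {μ : ℝ} (hπ : ∀ k, 0 ≤ π k)
    (hsum : ∑ k ∈ range (N + 1), π k = 1) (hmean : ∑ k ∈ range (N + 1), (k : ℝ) * π k ≤ μ) :
    ∑ k ∈ range (N + 1), π k * ((k : ℝ) / (1 + m - k)) ≤ min μ N / (1 + m - N) := by
  have hD : (0 : ℝ) ≤ 1 + m - N := by
    have : (N : ℝ) ≤ m := by exact_mod_cast hNm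
    linarith
  refine (sum_mul_div_le_mean_div hNm hπ).trans (div_le_div_of_nonneg_right ?_ hD)
  have := sum_natCast_mul_le (N := N) hπ
  rw [hsum, mul_one] at this
  exact le_min hmean this

end LinearProgram

theorem natFloor_mul_div_le {c r : ℝ} (hc : 0 ≤ c) (hcr : c < r) (m : ℕ) :
    ⌊c * m / r⌋₊ ≤ m := by
  have hr : 0 < r := hc.trans_lt hcr
  refine Nat.floor_le_of_le ((div_le_iff₀ hr).mpr ?_)
  rw [mul_comm (m : ℝ)]
  exact mul_le_mul_of_nonneg_right hcr.le m.cast_nonneg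

theorem mul_div_one_add_sub_natFloor_le {c r : ℝ} (hc : 0 ≤ c) (hcr : c < r) (m : ℕ) :
    c * m / (1 + m - ⌊c * m / r⌋₊) ≤ c * r / (r - c) := by
  have hr : 0 < r := hc.trans_lt hcr
  have hfloor : (⌊c * m / r⌋₊ : ℝ) * r ≤ c * m :=
    (le_div_iff₀ hr).mp (Nat.floor_le (by positivity))
  have hD : (0 : ℝ) < 1 + m - ⌊c * m / r⌋₊ := by
    have : (⌊c * m / r⌋₊ : ℝ) ≤ m := by exact_mod_cast natFloor_mul_div_le hc hcr m
    linarith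
  rw [div_le_div_iff₀ hD (sub_pos.mpr hcr)]
  nlinarith [mul_le_mul_of_nonneg_left hfloor hc]

theorem seqstep_lp_two_point_optimum_general
    (c q : ℝ) (hc : c ∈ Set.Ioo (0 : ℝ) 1) (hq : q ∈ Set.Ioo (0 : ℝ) 1)
    (m : ℕ) :
    ∃ π : ℕ → ℝ,
      ((∀ k, 0 ≤ π k) ∧
        (∑ k ∈ Finset.range (⌊c * m / (q + c * (1 - q))⌋₊ + 1), π k = 1) ∧
        (∑ k ∈ Finset.range (⌊c * m / (q + c * (1 - q))⌋₊ + 1), (k : ℝ) * π k ≤ c * m)) ∧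
      (∀ π' : ℕ → ℝ, (∀ k, 0 ≤ π' k) →
        (∑ k ∈ Finset.range (⌊c * m / (q + c * (1 - q))⌋₊ + 1), π' k = 1) →
        (∑ k ∈ Finset.range (⌊c * m / (q + c * (1 - q))⌋₊ + 1), (k : ℝ) * π' k ≤ c * m) →
        ∑ k ∈ Finset.range (⌊c * m / (q + c * (1 - q))⌋₊ + 1),
            π' k * ((k : ℝ) / (1 + (m : ℝ) - k)) ≤
          ∑ k ∈ Finset.range (⌊c * m / (q + c * (1 - q))⌋₊ + 1),
            π k * ((k : ℝ) / (1 + (m : ℝ) - k))) ∧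
      (∀ k, k ≠ 0 → k ≠ ⌊c * m / (q + c * (1 - q))⌋₊ → π k = 0) ∧
      (∑ k ∈ Finset.range (⌊c * m / (q + c * (1 - q))⌋₊ + 1),
          π k * ((k : ℝ) / (1 + (m : ℝ) - k)) ≤
        c * (q + c * (1 - q)) / (q * (1 - c))) := by
  obtain ⟨hc₀, hc₁⟩ := hc
  obtain ⟨hq₀, -⟩ := hq
  set r := q + c * (1 - q)
  have hcr : c < r := by nlinarith
  set M := ⌊c * m / r⌋₊
  have hMm : M ≤ m := natFloor_mul_div_le hc₀.le hcr m
  have hcm : 0 ≤ c * m := by positivity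
  obtain ⟨t, ht₀, ht₁, htM⟩ := exists_mul_eq_min hcm M
  have hvalue := twoPoint.sum_mul_div_eq m M t
  rw [htM] at hvalue
  refine ⟨twoPoint M t, ⟨twoPoint.nonneg ht₀ ht₁, twoPoint.sum_eq_one M t, ?_⟩,
    fun π' hπ' hsum hmean => hvalue ▸ sum_mul_div_le_min_div hMm hπ' hsum hmean,
    fun k hk₀ hkM => twoPoint.eq_zero_of_ne hk₀ hkM, ?_⟩
  · rw [twoPoint.mean_eq, htM]
    exact min_le_left _ _
  · have hD : (0 : ℝ) ≤ 1 + m - M := by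
      have : (M : ℝ) ≤ m := by exact_mod_cast hMm
      linarith
    calc _ = min (c * m) M / (1 + m - M) := hvalue
      _ ≤ c * m / (1 + m - M) := div_le_div_of_nonneg_right (min_le_left _ _) hD
      _ ≤ c * r / (r - c) := mul_div_one_add_sub_natFloor_le hc₀.le hcr m
      _ = c * r / (q * (1 - c)) := by rw [show r - c = q * (1 - c) by ring]

/-- The LP from the exchangeability proof: maximizing `∑ π_k k/(1+m-k)` over probability
vectors on `{0,...,m'}` with `∑ k π_k ≤ cm` (where `m' = ⌊cm/(q+c(1-q))⌋`) is achieved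
by a vector supported on `{0, m'}`, with optimal value at most `c(q+c(1-q))/(q(1-c))`. -/
theorem seqstep_lp_two_point_optimum
    (c q : ℝ) (hc : c ∈ Set.Ioo (0 : ℝ) 1) (hq : q ∈ Set.Ioo (0 : ℝ) 1)
    (m : ℕ) (hm : 1 ≤ m) :
    ∃ π : ℕ → ℝ,
      ((∀ k, 0 ≤ π k) ∧
        (∑ k ∈ Finset.range (⌊c * m / (q + c * (1 - q))⌋₊ + 1), π k = 1) ∧
        (∑ k ∈ Finset.range (⌊c * m / (q + c * (1 - q))⌋₊ + 1), (k : ℝ) * π k ≤ c * m)) ∧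
      (∀ π' : ℕ → ℝ, (∀ k, 0 ≤ π' k) →
        (∑ k ∈ Finset.range (⌊c * m / (q + c * (1 - q))⌋₊ + 1), π' k = 1) →
        (∑ k ∈ Finset.range (⌊c * m / (q + c * (1 - q))⌋₊ + 1), (k : ℝ) * π' k ≤ c * m) →
        ∑ k ∈ Finset.range (⌊c * m / (q + c * (1 - q))⌋₊ + 1),
            π' k * ((k : ℝ) / (1 + (m : ℝ) - k)) ≤
          ∑ k ∈ Finset.range (⌊c * m / (q + c * (1 - q))⌋₊ + 1),
            π k * ((k : ℝ) / (1 + (m : ℝ) - k))) ∧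
      (∀ k, k ≠ 0 → k ≠ ⌊c * m / (q + c * (1 - q))⌋₊ → π k = 0) ∧
      (∑ k ∈ Finset.range (⌊c * m / (q + c * (1 - q))⌋₊ + 1),
          π k * ((k : ℝ) / (1 + (m : ℝ) - k)) ≤
        c * (q + c * (1 - q)) / (q * (1 - c))) :=
  seqstep_lp_two_point_optimum_general c q hc hq m
end

section
/- Suppose the ordering of p-values $p_1, \dots, p_m$ is fixed, and there exist constants $\delta \geq 0$, $\epsilon \geq 0$ with $c + \delta < 1$ such that, setting $a_j = \mathbb{P}(p_j \leq c \mid \mathbf{1}\{p_{-j} \leq c\})$ for null $j$, one has $\mathbb{P}(\max_{j \in \mathcal{H}_0} a_j \leq c + \delta) \geq 1 - \epsilon$. Then the random variable $R_\delta = \frac{\#\{j \leq \hat{k},\, j \in \mathcal{H}_0 : p_j \leq c,\, a_j \leq c + \delta\}}{1 + \#\{j \leq \hat{k},\, j \in \mathcal{H}_0 : p_j > c\}}$ satisfies $\mathbb{E}[R_\delta] \leq \frac{c + \delta}{1 - c - \delta}$, where $\hat{k}$ is the Selective SeqStep+ threshold. -/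
/-!
Write `R_δ = ∑_{j ∈ H₀} 1{p_j ≤ c, a_j ≤ c + δ} G_j`, where `G_j` is the ratio
`1{j ≤ k̂_j} / (1 + #{i ∈ H₀ \ {j} : i ≤ k̂_j, p_i > c})` computed with `p_j` replaced by a
value `≤ c`; this is legitimate because `k̂_j = k̂` on `{p_j ≤ c}`. As `G_j` is a function of
`1{p_{-j} ≤ c}`, conditioning on that vector gives
`E[1{p_j ≤ c, a_j ≤ c + δ} G_j] ≤ (c + δ) / (1 - c - δ) · E[1{p_j > c} G_j]`.
Finally `∑_{j ∈ H₀} 1{p_j > c} G_j ≤ 1` pointwise: flipping any one null `p_j > c` with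
`j ≤ k̂_j` changes the two counts of the SeqStep ratio in the same way, so all these `j` share
the same `k̂_j`, and the sum is `#S / #V` for some `S ⊆ V`.
-/

open MeasureTheory Finset
open scoped Classical

namespace SelectiveSeqStep

/-- `R` plays the role of the set of indices with `p_i ≤ c`. -/
noncomputable def ratio (R : Finset ℕ) (k : ℕ) : ℝ :=
  (1 + #(Icc 1 k \ R) : ℝ) / max (#(Icc 1 k ∩ R) : ℝ) 1

noncomputable def threshold (t : ℝ) (m : ℕ) (R : Finset ℕ) : ℕ :=
  ((Icc 1 m).filter fun k => ratio R k ≤ t).sup id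

variable {t : ℝ} {m : ℕ} {R : Finset ℕ}

theorem le_threshold {k : ℕ} (hk : k ∈ Icc 1 m) (h : ratio R k ≤ t) : k ≤ threshold t m R :=
  le_sup (f := id) (mem_filter.2 ⟨hk, h⟩)

theorem threshold_mem (h : threshold t m R ≠ 0) :
    threshold t m R ∈ Icc 1 m ∧ ratio R (threshold t m R) ≤ t := by
  have hne : ((Icc 1 m).filter fun k => ratio R k ≤ t).Nonempty :=
    nonempty_of_ne_empty fun he => h (by simp [threshold, he])
  obtain ⟨k, hk, hkeq⟩ := exists_mem_eq_sup _ hne id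
  rw [threshold, hkeq]
  exact mem_filter.1 hk

theorem eq_threshold {k : ℕ} (hkm : k ≤ m) (hk : k = 0 ∨ ratio R k ≤ t)
    (hmax : ∀ k' ∈ Icc 1 m, ratio R k' ≤ t → k' ≤ k) : k = threshold t m R := by
  refine le_antisymm ?_ (Finset.sup_le fun k' hk' => hmax k' (mem_filter.1 hk').1
    (mem_filter.1 hk').2)
  rcases Nat.eq_zero_or_pos k with rfl | hpos
  · exact Nat.zero_le _
  · exact le_threshold (mem_Icc.2 ⟨hpos, hkm⟩) (hk.resolve_left hpos.ne')

theorem ratio_insert {j k : ℕ} (hj : j ∈ Icc 1 k) (hjR : j ∉ R) :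
    ratio (insert j R) k = #(Icc 1 k \ R) / (#(Icc 1 k ∩ R) + 1 : ℝ) := by
  have hsdiff : #(Icc 1 k \ insert j R) + 1 = #(Icc 1 k \ R) := by
    rw [sdiff_insert, card_erase_add_one (mem_sdiff.2 ⟨hj, hjR⟩)]
  have hinter : #(Icc 1 k ∩ insert j R) = #(Icc 1 k ∩ R) + 1 := by
    rw [inter_insert_of_mem hj, card_insert_of_notMem fun h => hjR (mem_inter.1 h).2]
  rw [ratio, hinter, ← hsdiff]
  push_cast
  rw [max_eq_left (le_add_of_nonneg_left (Nat.cast_nonneg _)), add_comm (1 : ℝ)]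

theorem threshold_insert_le {j j' : ℕ} (hj : 1 ≤ j) (hj' : 1 ≤ j') (hjR : j ∉ R) (hj'R : j' ∉ R)
    (hjk : j ≤ threshold t m (insert j' R)) (hj'k : j' ≤ threshold t m (insert j' R)) :
    threshold t m (insert j' R) ≤ threshold t m (insert j R) := by
  obtain ⟨hk, hratio⟩ := threshold_mem (t := t) (m := m) (R := insert j' R) (by omega)
  refine le_threshold hk ?_
  rwa [ratio_insert (mem_Icc.2 ⟨hj, hjk⟩) hjR, ← ratio_insert (mem_Icc.2 ⟨hj', hj'k⟩) hj'R]

theorem threshold_insert_eq {j j' : ℕ} (hj : 1 ≤ j) (hj' : 1 ≤ j') (hjR : j ∉ R) (hj'R : j' ∉ R)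
    (hjk : j ≤ threshold t m (insert j R)) (hj'k : j' ≤ threshold t m (insert j' R)) :
    threshold t m (insert j R) = threshold t m (insert j' R) := by
  rcases le_total (threshold t m (insert j R)) (threshold t m (insert j' R)) with h | h
  · exact le_antisymm h (threshold_insert_le hj hj' hjR hj'R (hjk.trans h) hj'k)
  · exact le_antisymm (threshold_insert_le hj' hj hj'R hjR (hj'k.trans h) hjk) h

/-- Evaluated at `T = insert j R`, i.e. with `p_j` replaced by a value `≤ c`, this is the
paper's `1{j ≤ k̂_j} / (1 + ∑_{i ∈ H₀, i ≠ j} 1{i ≤ k̂_j} 1{p_i > c})`. -/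
noncomputable def looWeight (t : ℝ) (m : ℕ) (H0 : Finset ℕ) (j : ℕ) (T : Finset ℕ) : ℝ :=
  if j ≤ threshold t m T then (1 + #((H0 \ T).filter (· ≤ threshold t m T)) : ℝ)⁻¹ else 0

variable {H0 : Finset ℕ} {j : ℕ} {T : Finset ℕ}

theorem looWeight_nonneg : 0 ≤ looWeight t m H0 j T := by
  unfold looWeight
  split_ifs <;> positivity

theorem looWeight_le_one : looWeight t m H0 j T ≤ 1 := by
  unfold looWeight
  split_ifs
  · exact inv_le_one_of_one_le₀ (by simp)
  · exact zero_le_one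

theorem sum_looWeight_le_one (hH0 : 0 ∉ H0) :
    ∑ j ∈ H0 \ R, looWeight t m H0 j (insert j R) ≤ 1 := by
  set S := (H0 \ R).filter fun j => j ≤ threshold t m (insert j R)
  rw [← sum_filter_of_ne (f := fun j => looWeight t m H0 j (insert j R))
    (p := fun j => j ≤ threshold t m (insert j R)) fun j _ hj => by_contra fun h => hj (if_neg h)]
  rcases S.eq_empty_or_nonempty with hempty | ⟨j₀, hj₀⟩
  · simp [S, hempty]
  have hS : ∀ j ∈ S, 1 ≤ j ∧ j ∉ R ∧ j ≤ threshold t m (insert j R) := fun j hj => by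
    simp only [S, mem_filter, mem_sdiff] at hj
    exact ⟨Nat.one_le_iff_ne_zero.2 (ne_of_mem_of_not_mem hj.1.1 hH0), hj.1.2, hj.2⟩
  set k := threshold t m (insert j₀ R)
  have hk : ∀ j ∈ S, threshold t m (insert j R) = k := fun j hj =>
    threshold_insert_eq (hS j hj).1 (hS j₀ hj₀).1 (hS j hj).2.1 (hS j₀ hj₀).2.1 (hS j hj).2.2
      (hS j₀ hj₀).2.2
  set V := (H0 \ R).filter (· ≤ k)
  have hSV : S ⊆ V := fun j hj => mem_filter.2 ⟨(mem_filter.1 hj).1, hk j hj ▸ (hS j hj).2.2⟩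
  have hterm : ∀ j ∈ S, looWeight t m H0 j (insert j R) = (#V : ℝ)⁻¹ := by
    intro j hj
    rw [looWeight, if_pos (hS j hj).2.2, hk j hj, sdiff_insert, filter_erase,
      ← card_erase_add_one (hSV hj)]
    push_cast
    ring
  rw [sum_congr rfl hterm, sum_const, nsmul_eq_mul]
  exact mul_inv_le_one_of_le₀ (by exact_mod_cast card_le_card hSV) (Nat.cast_nonneg _)

theorem card_div_eq_sum_looWeight (P : ℕ → Prop) :
    (#((H0 ∩ R).filter fun j => j ≤ threshold t m R ∧ P j) : ℝ) /
        (1 + #((H0 \ R).filter (· ≤ threshold t m R)))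
      = ∑ j ∈ (H0 ∩ R).filter P, looWeight t m H0 j (insert j R) := by
  have hR : ∀ j ∈ (H0 ∩ R).filter P, looWeight t m H0 j (insert j R) = looWeight t m H0 j R :=
    fun j hj => by rw [insert_eq_of_mem (mem_inter.1 (mem_filter.1 hj).1).2]
  rw [sum_congr rfl hR]
  simp only [looWeight, ← sum_filter, sum_const, filter_filter, nsmul_eq_mul, div_eq_mul_inv,
    and_comm]

noncomputable def candidates (p : ℕ → ℝ) (c : ℝ) (m : ℕ) : Finset ℕ :=
  (Icc 1 m).filter (p · ≤ c)

variable {p : ℕ → ℝ} {c : ℝ}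

theorem ratio_candidates {k : ℕ} (hk : k ≤ m) :
    ratio (candidates p c m) k =
      (1 + #((Icc 1 k).filter (c < p ·)) : ℝ) / max (#((Icc 1 k).filter (p · ≤ c)) : ℝ) 1 := by
  rw [ratio]
  congr 4 <;> ext i <;> simp only [candidates, mem_sdiff, mem_inter, mem_filter, mem_Icc] <;> grind

theorem eq_threshold_candidates {k : ℕ} (h : k ≤ m ∧
    (k = 0 ∨
      (1 + #((Icc 1 k).filter (c < p ·)) : ℝ) / max (#((Icc 1 k).filter (p · ≤ c)) : ℝ) 1 ≤ t) ∧
    ∀ k', 1 ≤ k' → k' ≤ m →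
      (1 + #((Icc 1 k').filter (c < p ·)) : ℝ) / max (#((Icc 1 k').filter (p · ≤ c)) : ℝ) 1 ≤ t →
        k' ≤ k) :
    k = threshold t m (candidates p c m) := by
  obtain ⟨hkm, hk, hmax⟩ := h
  refine eq_threshold hkm (by rwa [ratio_candidates hkm]) fun k' hk' hk't => ?_
  obtain ⟨h1, hm⟩ := mem_Icc.1 hk'
  exact hmax k' h1 hm (by rwa [← ratio_candidates hm])

theorem inter_candidates (hH0 : H0 ⊆ Icc 1 m) : H0 ∩ candidates p c m = H0.filter (p · ≤ c) := by
  ext j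
  simp only [candidates, mem_inter, mem_filter]
  exact ⟨fun h => ⟨h.1, h.2.2⟩, fun h => ⟨h.1, hH0 h.1, h.2⟩⟩

theorem sdiff_candidates (hH0 : H0 ⊆ Icc 1 m) : H0 \ candidates p c m = H0.filter (c < p ·) := by
  ext j
  simp only [candidates, mem_sdiff, mem_filter, not_and, not_le]
  exact ⟨fun h => ⟨h.1, h.2 (hH0 h.1)⟩, fun h => ⟨h.1, fun _ => h.2⟩⟩

theorem card_div_eq_sum_looWeight_candidates (hH0 : H0 ⊆ Icc 1 m) (P : ℕ → Prop) :
    (#(H0.filter fun j => j ≤ threshold t m (candidates p c m) ∧ p j ≤ c ∧ P j) : ℝ) /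
        (1 + #(H0.filter fun j => j ≤ threshold t m (candidates p c m) ∧ c < p j))
      = ∑ j ∈ H0.filter (fun j => p j ≤ c ∧ P j),
          looWeight t m H0 j (insert j (candidates p c m)) := by
  have h := card_div_eq_sum_looWeight (H0 := H0) (R := candidates p c m) (t := t) (m := m) P
  rw [inter_candidates hH0, sdiff_candidates hH0, filter_filter, filter_filter, filter_filter] at h
  simpa only [and_assoc, and_left_comm, and_comm] using h

theorem sum_looWeight_candidates_le_one (hH0 : H0 ⊆ Icc 1 m) :
    ∑ j ∈ H0.filter (fun j => c < p j), looWeight t m H0 j (insert j (candidates p c m)) ≤ 1 := by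
  rw [← sdiff_candidates hH0]
  exact sum_looWeight_le_one fun h0 => by simpa using hH0 h0

theorem measurable_comap_insert_candidates {Ω : Type*} (p : ℕ → Ω → ℝ) (c : ℝ) (m j : ℕ) :
    Measurable[MeasurableSpace.comap (fun ω (i : {i // i ∈ Icc 1 m ∧ i ≠ j}) =>
        if p i.1 ω ≤ c then (1 : ℝ) else 0) inferInstance]
      fun ω => insert j (candidates (p · ω) c m) := by
  -- the σ-algebra on the domain is not an instance, so it is left to unification
  refine (@measurable_finset_iff _ _ (_) _).2 fun i => ?_
  by_cases hij : i = j
  · simp [hij]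
  by_cases hi : i ∈ Icc 1 m
  · have hmem : (fun ω => i ∈ insert j (candidates (p · ω) c m)) =
        fun ω => (if p i ω ≤ c then (1 : ℝ) else 0) = 1 := by
      ext ω
      by_cases hp : p i ω ≤ c <;> simp [candidates, hij, hi, hp]
    rw [hmem]
    exact ((measurable_pi_apply (⟨i, hi, hij⟩ : {i // i ∈ Icc 1 m ∧ i ≠ j})).eq_const 1).comp
      (comap_measurable _)
  · simp [candidates, hij, hi]

theorem comap_indicators_le {Ω : Type*} [MeasurableSpace Ω] {p : ℕ → Ω → ℝ}
    (hp : ∀ i, Measurable (p i)) (c : ℝ) (m j : ℕ) :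
    MeasurableSpace.comap (fun ω (i : {i // i ∈ Icc 1 m ∧ i ≠ j}) =>
      if p i.1 ω ≤ c then (1 : ℝ) else 0) inferInstance ≤ ‹MeasurableSpace Ω› :=
  measurable_iff_comap_le.1 <| measurable_pi_lambda _ fun i =>
    Measurable.ite (measurableSet_le (hp i.1) measurable_const) measurable_const measurable_const

end SelectiveSeqStep

section CondExp

variable {Ω : Type*} {𝒢 m₀ : MeasurableSpace Ω} {μ : Measure[m₀] Ω} {E : Set Ω} {s : ℝ}

theorem integral_indicator_le_mul_integral_of_condExp_le [IsFiniteMeasure μ] (h𝒢 : 𝒢 ≤ m₀)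
    (hE : MeasurableSet E) {h : Ω → ℝ} (hh : StronglyMeasurable[𝒢] h) (hh0 : 0 ≤ h) {C : ℝ}
    (hhC : ∀ ω, h ω ≤ C) (hs : ∀ ω, h ω ≠ 0 → μ[E.indicator (fun _ => (1 : ℝ)) | 𝒢] ω ≤ s) :
    ∫ ω, E.indicator h ω ∂μ ≤ s * ∫ ω, h ω ∂μ := by
  have hbound : ∀ᵐ ω ∂μ, ‖h ω‖ ≤ C :=
    ae_of_all _ fun ω => by rw [Real.norm_of_nonneg (hh0 ω)]; exact hhC ω
  have hint : Integrable h μ := .of_bound (hh.mono h𝒢).aestronglyMeasurable C hbound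
  have hpull : μ[h * E.indicator (fun _ => (1 : ℝ)) | 𝒢] =ᵐ[μ]
      h * μ[E.indicator (fun _ => (1 : ℝ)) | 𝒢] :=
    condExp_stronglyMeasurable_mul_of_bound h𝒢 hh ((integrable_const 1).indicator hE) C hbound
  calc ∫ ω, E.indicator h ω ∂μ = ∫ ω, μ[h * E.indicator (fun _ => (1 : ℝ)) | 𝒢] ω ∂μ := by
        rw [integral_condExp h𝒢]
        congr with ω
        by_cases hω : ω ∈ E <;> simp [hω]
    _ ≤ ∫ ω, s * h ω ∂μ := by
        refine integral_mono_ae integrable_condExp (hint.const_mul s) ?_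
        filter_upwards [hpull] with ω hω
        rw [hω, Pi.mul_apply, mul_comm s]
        by_cases h0 : h ω = 0
        · simp [h0]
        · exact mul_le_mul_of_nonneg_left (hs ω h0) (hh0 ω)
    _ = s * ∫ ω, h ω ∂μ := integral_const_mul s _

theorem integral_indicator_inter_le_of_ae_eq_condExp [IsFiniteMeasure μ] (h𝒢 : 𝒢 ≤ m₀)
    (hE : MeasurableSet E) {g a : Ω → ℝ} (hg : StronglyMeasurable[𝒢] g) (hg0 : 0 ≤ g) {C : ℝ}
    (hgC : ∀ ω, g ω ≤ C) (ha : a =ᵐ[μ] μ[E.indicator (fun _ => (1 : ℝ)) | 𝒢]) (hs0 : 0 ≤ s)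
    (hs1 : s < 1) :
    ∫ ω, (E ∩ {ω | a ω ≤ s}).indicator g ω ∂μ ≤ s / (1 - s) * ∫ ω, Eᶜ.indicator g ω ∂μ := by
  set A := μ[E.indicator (fun _ => (1 : ℝ)) | 𝒢]
  set h := {ω | A ω ≤ s}.indicator g
  have hAs : MeasurableSet[𝒢] {ω | A ω ≤ s} :=
    measurableSet_le stronglyMeasurable_condExp.measurable measurable_const
  have hh0 : 0 ≤ h := Set.indicator_nonneg fun ω _ => hg0 ω
  have hhg : h ≤ g := Set.indicator_le_self' fun ω _ => hg0 ω
  have hgint : Integrable g μ :=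
    .of_bound (hg.mono h𝒢).aestronglyMeasurable C (ae_of_all _ fun ω => by
      rw [Real.norm_of_nonneg (hg0 ω)]; exact hgC ω)
  have hint : Integrable h μ := hgint.indicator (h𝒢 _ hAs)
  have hEh : ∫ ω, E.indicator h ω ∂μ ≤ s * ∫ ω, h ω ∂μ :=
    integral_indicator_le_mul_integral_of_condExp_le h𝒢 hE (hg.indicator hAs) hh0
      (fun ω => (hhg ω).trans (hgC ω))
      fun ω hω => by_contra fun hA => hω (Set.indicator_of_notMem (s := {ω | A ω ≤ s}) hA g)
  have hsplit : ∫ ω, h ω ∂μ = ∫ ω, E.indicator h ω ∂μ + ∫ ω, Eᶜ.indicator h ω ∂μ := by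
    rw [integral_indicator hE, integral_indicator hE.compl, integral_add_compl hE hint]
  have hcompl : ∫ ω, Eᶜ.indicator h ω ∂μ ≤ ∫ ω, Eᶜ.indicator g ω ∂μ :=
    integral_mono (hint.indicator hE.compl) (hgint.indicator hE.compl)
      fun ω => Set.indicator_le_indicator (hhg ω)
  have heq : ∫ ω, (E ∩ {ω | a ω ≤ s}).indicator g ω ∂μ = ∫ ω, E.indicator h ω ∂μ := by
    rw [Set.indicator_indicator]
    refine integral_congr_ae ?_
    filter_upwards [ha] with ω hω
    simp only [Set.indicator_apply, Set.mem_inter_iff, Set.mem_ofPred_eq, hω]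
  rw [heq, div_mul_eq_mul_div, le_div_iff₀ (by linarith)]
  nlinarith [mul_le_mul_of_nonneg_left hcompl hs0]

theorem integral_sum_indicator_inter_le_of_ae_eq_condExp [IsProbabilityMeasure μ] {ι : Type*}
    (H : Finset ι) {𝒢 : ι → MeasurableSpace Ω} (h𝒢 : ∀ j, 𝒢 j ≤ m₀) {E : ι → Set Ω}
    (hE : ∀ j, MeasurableSet (E j)) {g a : ι → Ω → ℝ} (hg : ∀ j, StronglyMeasurable[𝒢 j] (g j))
    (hg0 : ∀ j, 0 ≤ g j) {C : ℝ} (hgC : ∀ j ω, g j ω ≤ C) (ha_meas : ∀ j, Measurable (a j))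
    (ha : ∀ j ∈ H, a j =ᵐ[μ] μ[(E j).indicator (fun _ => (1 : ℝ)) | 𝒢 j])
    (hsum : ∀ ω, ∑ j ∈ H, (E j)ᶜ.indicator (g j) ω ≤ 1) (hs0 : 0 ≤ s) (hs1 : s < 1) :
    ∫ ω, ∑ j ∈ H, (E j ∩ {ω | a j ω ≤ s}).indicator (g j) ω ∂μ ≤ s / (1 - s) := by
  have hgint : ∀ j, Integrable (g j) μ := fun j =>
    .of_bound ((hg j).mono (h𝒢 j)).aestronglyMeasurable C (ae_of_all _ fun ω => by
      rw [Real.norm_of_nonneg (hg0 j ω)]; exact hgC j ω)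
  calc ∫ ω, ∑ j ∈ H, (E j ∩ {ω | a j ω ≤ s}).indicator (g j) ω ∂μ
      = ∑ j ∈ H, ∫ ω, (E j ∩ {ω | a j ω ≤ s}).indicator (g j) ω ∂μ :=
        integral_finsetSum _ fun j _ =>
          (hgint j).indicator ((hE j).inter (measurableSet_le (ha_meas j) measurable_const))
    _ ≤ ∑ j ∈ H, s / (1 - s) * ∫ ω, (E j)ᶜ.indicator (g j) ω ∂μ :=
        sum_le_sum fun j hj => integral_indicator_inter_le_of_ae_eq_condExp (h𝒢 j) (hE j) (hg j)
          (hg0 j) (hgC j) (ha j hj) hs0 hs1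
    _ = s / (1 - s) * ∫ ω, ∑ j ∈ H, (E j)ᶜ.indicator (g j) ω ∂μ := by
        rw [← mul_sum, integral_finsetSum _ fun j _ => (hgint j).indicator (hE j).compl]
    _ ≤ s / (1 - s) := by
        refine mul_le_of_le_one_right (div_nonneg hs0 (by linarith)) ?_
        exact (integral_mono (integrable_finsetSum _ fun j _ => (hgint j).indicator (hE j).compl)
          (integrable_const 1) hsum).trans (by simp)

end CondExp

open SelectiveSeqStep

theorem seqstep_Rdelta_expectation_bound_general
    {Ω : Type*} [MeasurableSpace Ω] (μ : Measure Ω) [IsProbabilityMeasure μ]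
    (m : ℕ) (c q δ : ℝ)
    (hc : 0 < c)
    (hδ : 0 ≤ δ) (hcδ : c + δ < 1)
    (pv : ℕ → Ω → ℝ) (hmeas : ∀ j, Measurable (pv j))
    (H0 : Finset ℕ) (hH0 : H0 ⊆ Finset.Icc 1 m)
    (a : ℕ → Ω → ℝ) (hameas : ∀ j, Measurable (a j))
    -- `a j` is the conditional probability of `{p_j ≤ c}` given the indicator vector
    -- `1{p_i ≤ c}, i ≠ j`:
    (ha : ∀ j ∈ H0, a j =ᵐ[μ]
      μ[Set.indicator {ω | pv j ω ≤ c} (fun _ => (1 : ℝ)) |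
        MeasurableSpace.comap
          (fun ω => fun i : {i // i ∈ Finset.Icc 1 m ∧ i ≠ j} =>
            if pv i.1 ω ≤ c then (1 : ℝ) else 0)
          inferInstance])
    (khat : Ω → ℕ)
    -- `khat` is the Selective SeqStep+ threshold (pathwise), 0 if no valid k exists:
    (hkhat : ∀ ω, khat ω ≤ m ∧
      (khat ω = 0 ∨
        (1 + (((Finset.Icc 1 (khat ω)).filter (fun j => c < pv j ω)).card : ℝ)) /
            max (((Finset.Icc 1 (khat ω)).filter (fun j => pv j ω ≤ c)).card : ℝ) 1 ≤
          (1 - c) / c * q) ∧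
      ∀ k, 1 ≤ k → k ≤ m →
        (1 + (((Finset.Icc 1 k).filter (fun j => c < pv j ω)).card : ℝ)) /
            max (((Finset.Icc 1 k).filter (fun j => pv j ω ≤ c)).card : ℝ) 1 ≤
          (1 - c) / c * q → k ≤ khat ω) :
    ∫ ω, (((H0.filter
          (fun j => j ≤ khat ω ∧ pv j ω ≤ c ∧ a j ω ≤ c + δ)).card : ℝ) /
        (1 + ((H0.filter (fun j => j ≤ khat ω ∧ c < pv j ω)).card : ℝ))) ∂μ ≤
      (c + δ) / (1 - c - δ) := by
  set G : ℕ → Ω → ℝ := fun j ω =>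
    looWeight ((1 - c) / c * q) m H0 j (insert j (candidates (pv · ω) c m))
  have hpoint : ∀ ω, (#(H0.filter fun j => j ≤ khat ω ∧ pv j ω ≤ c ∧ a j ω ≤ c + δ) : ℝ) /
        (1 + #(H0.filter fun j => j ≤ khat ω ∧ c < pv j ω)) =
      ∑ j ∈ H0, ({ω | pv j ω ≤ c} ∩ {ω | a j ω ≤ c + δ}).indicator (G j) ω := fun ω => by
    rw [eq_threshold_candidates (hkhat ω), card_div_eq_sum_looWeight_candidates hH0, sum_filter]
    simp only [Set.indicator_apply, Set.mem_inter_iff, Set.mem_ofPred_eq, G]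
  rw [integral_congr_ae (ae_of_all _ hpoint), sub_sub]
  refine integral_sum_indicator_inter_le_of_ae_eq_condExp H0
    (comap_indicators_le hmeas c m)
    (fun j => measurableSet_le (hmeas j) measurable_const)
    (fun j => ((Measurable.of_discrete (f := looWeight _ m H0 j)).comp
      (measurable_comap_insert_candidates pv c m j)).stronglyMeasurable)
    (fun _ _ => looWeight_nonneg) (fun _ _ => looWeight_le_one) hameas ha (fun ω => ?_)
    (by linarith) hcδ
  simp only [Set.indicator_apply, Set.mem_compl_iff, Set.mem_ofPred_eq, not_le, ← sum_filter]
  exact sum_looWeight_candidates_le_one hH0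

/-- Core estimate of Theorem 2.1: if `a_j = P(p_j ≤ c | 1{p_{-j} ≤ c})` satisfies
`P(max_{j ∈ H₀} a_j ≤ c + δ) ≥ 1 - ε` with `c + δ < 1`, then the ratio
`R_δ = #{j ≤ k̂, j ∈ H₀ : p_j ≤ c, a_j ≤ c+δ} / (1 + #{j ≤ k̂, j ∈ H₀ : p_j > c})`
satisfies `E[R_δ] ≤ (c+δ)/(1-c-δ)`. -/
theorem seqstep_Rdelta_expectation_bound
    {Ω : Type*} [MeasurableSpace Ω] (μ : Measure Ω) [IsProbabilityMeasure μ]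
    (m : ℕ) (c q δ ε : ℝ)
    (hc : 0 < c) (hc1 : c < 1) (hq : 0 < q) (hq1 : q < 1)
    (hδ : 0 ≤ δ) (hε : 0 ≤ ε) (hcδ : c + δ < 1)
    (pv : ℕ → Ω → ℝ) (hmeas : ∀ j, Measurable (pv j))
    (H0 : Finset ℕ) (hH0 : H0 ⊆ Finset.Icc 1 m)
    (a : ℕ → Ω → ℝ) (hameas : ∀ j, Measurable (a j))
    -- `a j` is the conditional probability of `{p_j ≤ c}` given the indicator vector
    -- `1{p_i ≤ c}, i ≠ j`:
    (ha : ∀ j ∈ H0, a j =ᵐ[μ]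
      μ[Set.indicator {ω | pv j ω ≤ c} (fun _ => (1 : ℝ)) |
        MeasurableSpace.comap
          (fun ω => fun i : {i // i ∈ Finset.Icc 1 m ∧ i ≠ j} =>
            if pv i.1 ω ≤ c then (1 : ℝ) else 0)
          inferInstance])
    (hamax : ENNReal.ofReal (1 - ε) ≤ μ {ω | ∀ j ∈ H0, a j ω ≤ c + δ})
    (khat : Ω → ℕ) (hkmeas : Measurable khat)
    -- `khat` is the Selective SeqStep+ threshold (pathwise), 0 if no valid k exists:
    (hkhat : ∀ ω, khat ω ≤ m ∧
      (khat ω = 0 ∨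
        (1 + (((Finset.Icc 1 (khat ω)).filter (fun j => c < pv j ω)).card : ℝ)) /
            max (((Finset.Icc 1 (khat ω)).filter (fun j => pv j ω ≤ c)).card : ℝ) 1 ≤
          (1 - c) / c * q) ∧
      ∀ k, 1 ≤ k → k ≤ m →
        (1 + (((Finset.Icc 1 k).filter (fun j => c < pv j ω)).card : ℝ)) /
            max (((Finset.Icc 1 k).filter (fun j => pv j ω ≤ c)).card : ℝ) 1 ≤
          (1 - c) / c * q → k ≤ khat ω) :
    ∫ ω, (((H0.filter
          (fun j => j ≤ khat ω ∧ pv j ω ≤ c ∧ a j ω ≤ c + δ)).card : ℝ) /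
        (1 + ((H0.filter (fun j => j ≤ khat ω ∧ c < pv j ω)).card : ℝ))) ∂μ ≤
      (c + δ) / (1 - c - δ) :=
  seqstep_Rdelta_expectation_bound_general μ m c q δ hc hδ hcδ pv hmeas H0 hH0 a hameas ha khat
    hkhat
end

section
/- Suppose the ordering of p-values is fixed, $c \in (0,1)$, and setting $a_j = \mathbb{P}(p_j \leq c \mid \mathbf{1}\{p_{-j} \leq c\})$, the p-values satisfy $\mathbb{P}(\max_{j \in \mathcal{H}_0} a_j \leq c + \delta) \geq 1 - \epsilon$ for some $\delta \geq 0$, $\epsilon \geq 0$ with $c + \delta < 1$. Then Selective SeqStep+ at level $q$ satisfies $\mathrm{FDR} \leq q \cdot \frac{c + \delta}{c} \cdot \frac{1 - c}{1 - c - \delta} + \epsilon$. -/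
open MeasureTheory ProbabilityTheory
open scoped Classical

open Finset Function

/-!
On the event that every null has `a_j ≤ r := c + δ`, the stopping condition at `K = k̂` bounds
the FDP by `τ R`, where `τ = q (1 - c) / c` and `R` is the sum, over the nulls `j ≤ K` with
`p_j ≤ c`, of `1 / (1 + V⁻)` with `V⁻` the number of nulls `i ≤ K` with `p_i > c`. Off that event the FDP is at most `1`, which costs `ε`.

To bound `E R`, recompute the `j`-th summand with the sign of `p_j` forced to `p_j ≤ c`: the
result `g_j` is a function of the other signs, so conditioning on them gives
`E[1{p_j ≤ c} g_j] ≤ r E[g_j]`. For the nulls with `p_j > c`, forcing the sign produces one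
common stopping time whenever `j` lies below it, so their `g_j` sum to at most `1`. Hence
`E R ≤ r (1 + E R)`, that is `E R ≤ r / (1 - r)`.
-/

theorem Nat.findGreatest_eq_of_iff {P Q : ℕ → Prop} [DecidablePred P] [DecidablePred Q]
    {j n : ℕ} (hPQ : ∀ k, j ≤ k → k ≤ n → (P k ↔ Q k)) (hj : j ≤ Nat.findGreatest P n) :
    Nat.findGreatest P n = Nat.findGreatest Q n := by
  have hle : Nat.findGreatest P n ≤ Nat.findGreatest Q n := by
    by_cases h : Nat.findGreatest P n = 0
    · omega
    exact Nat.le_findGreatest (Nat.findGreatest_le n)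
      ((hPQ _ hj (Nat.findGreatest_le n)).1 (Nat.findGreatest_of_ne_zero rfl h))
  refine le_antisymm hle ?_
  by_cases h : Nat.findGreatest Q n = 0
  · omega
  exact Nat.le_findGreatest (Nat.findGreatest_le n)
    ((hPQ _ (hj.trans hle) (Nat.findGreatest_le n)).2 (Nat.findGreatest_of_ne_zero rfl h))

theorem Nat.findGreatest_eq_of_forall_le {P : ℕ → Prop} [DecidablePred P] {k n : ℕ}
    (hk : k ≤ n) (hP : k = 0 ∨ P k) (hmax : ∀ i, 1 ≤ i → i ≤ n → P i → i ≤ k) :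
    Nat.findGreatest P n = k :=
  Nat.findGreatest_eq_iff.2 ⟨hk, hP.resolve_left, fun i hki hin hPi => by
    have := hmax i (by omega) hin hPi; omega⟩

theorem Finset.sum_ite_inv_card_filter_le_one {ι : Type*} [LE ι] [DecidableLE ι]
    (N : Finset ι) (K : ι → ι) (Kstar : ι) (hK : ∀ j ∈ N, j ≤ K j → K j = Kstar) :
    ∑ j ∈ N, (if j ≤ K j then (#{i ∈ N | i ≤ K j} : ℝ)⁻¹ else 0) ≤ 1 := by
  calc _ ≤ ∑ j ∈ N, (if j ≤ Kstar then (#{i ∈ N | i ≤ Kstar} : ℝ)⁻¹ else 0) := by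
        refine sum_le_sum fun j hj => ?_
        split_ifs with h₁ h₂
        · rw [hK j hj h₁]
        · exact absurd (hK j hj h₁ ▸ h₁) h₂
        · positivity
        · rfl
    _ = #{i ∈ N | i ≤ Kstar} * (#{i ∈ N | i ≤ Kstar} : ℝ)⁻¹ := by
        rw [← sum_filter, sum_const, nsmul_eq_mul]
    _ ≤ 1 := mul_inv_le_one

theorem measurable_comp_of_dependsOn {Ω ι β : Type*} [MeasurableSpace β]
    {𝓕 : MeasurableSpace Ω} {I : Set ι} (hI : I.Finite) {f : Ω → ι → Bool}
    (hf : ∀ i ∈ I, Measurable[𝓕] fun ω => f ω i) {Φ : (ι → Bool) → β} (hΦ : DependsOn Φ I) :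
    Measurable[𝓕] fun ω => Φ (f ω) := by
  have : Finite I := hI.to_subtype
  have hfac : (fun ω => Φ (f ω)) =
      (fun x : I → Bool => Φ fun i => if h : i ∈ I then x ⟨i, h⟩ else false) ∘
        fun ω => I.domRestrict (f ω) := by
    funext ω; exact hΦ fun i hi => by rw [dif_pos hi]; rfl
  rw [hfac]
  exact (measurable_of_finite _).comp (measurable_pi_lambda _ fun i => hf i i.2)

section CondExp

variable {Ω : Type*} {m m₀ : MeasurableSpace Ω} {μ : Measure Ω}

theorem integral_indicator_le_mul_integral_of_condExp_le_s15 [IsFiniteMeasure μ] (hm : m ≤ m₀)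
    {A : Set Ω} (hA : MeasurableSet[m₀] A) {G : Ω → ℝ} (hGm : StronglyMeasurable[m] G)
    (hGint : Integrable G μ) (hG0 : 0 ≤ G) {r : ℝ}
    (hGr : ∀ ω, G ω ≠ 0 → μ[A.indicator (fun _ => (1 : ℝ)) | m] ω ≤ r) :
    ∫ ω, A.indicator G ω ∂μ ≤ r * ∫ ω, G ω ∂μ := by
  have : IsFiniteMeasure (μ.trim hm) := isFiniteMeasure_trim hm
  have hGA : A.indicator G = G * A.indicator (fun _ => (1 : ℝ)) := by
    ext ω; by_cases h : ω ∈ A <;> simp [h]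
  have hcx0 : 0 ≤ᵐ[μ] μ[A.indicator (fun _ => (1 : ℝ)) | m] :=
    condExp_nonneg (Filter.Eventually.of_forall fun ω => Set.indicator_nonneg (by simp) ω)
  calc ∫ ω, A.indicator G ω ∂μ = ∫ ω, (μ[G * A.indicator (fun _ => (1 : ℝ)) | m]) ω ∂μ := by
        rw [integral_condExp hm, hGA]
    _ = ∫ ω, G ω * (μ[A.indicator (fun _ => (1 : ℝ)) | m]) ω ∂μ :=
        integral_congr_ae (condExp_mul_of_stronglyMeasurable_left hGm
          (hGA ▸ hGint.indicator hA) ((integrable_const 1).indicator hA))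
    _ ≤ ∫ ω, r * G ω ∂μ := by
        refine integral_mono_of_nonneg (hcx0.mono fun ω h => mul_nonneg (hG0 ω) h)
          (hGint.const_mul r) (Filter.Eventually.of_forall fun ω => ?_)
        by_cases h : G ω = 0
        · simp [h]
        · show G ω * _ ≤ r * G ω
          rw [mul_comm r]; exact mul_le_mul_of_nonneg_left (hGr ω h) (hG0 ω)
    _ = r * ∫ ω, G ω ∂μ := integral_const_mul r G

theorem integral_sum_indicator_le_div [IsProbabilityMeasure μ] {ι : Type*} (N : Finset ι)
    {S : ι → Set Ω} (hS : ∀ j, MeasurableSet[m₀] (S j)) {𝓕 : ι → MeasurableSpace Ω}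
    (h𝓕 : ∀ j, 𝓕 j ≤ m₀) {G : ι → Ω → ℝ} (hGm : ∀ j, StronglyMeasurable[𝓕 j] (G j))
    (hGint : ∀ j, Integrable (G j) μ) (hG0 : ∀ j, 0 ≤ G j) {r : ℝ} (hr₀ : 0 ≤ r) (hr : r < 1)
    (hGr : ∀ j ω, G j ω ≠ 0 → μ[(S j).indicator (fun _ => (1 : ℝ)) | 𝓕 j] ω ≤ r)
    (hsum : ∀ ω, ∑ j ∈ N, G j ω ≤ 1 + ∑ j ∈ N, (S j).indicator (G j) ω) :
    ∫ ω, ∑ j ∈ N, (S j).indicator (G j) ω ∂μ ≤ r / (1 - r) := by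
  have hTint : ∀ j, Integrable ((S j).indicator (G j)) μ := fun j => (hGint j).indicator (hS j)
  set X := ∫ ω, ∑ j ∈ N, (S j).indicator (G j) ω ∂μ
  have hX : X ≤ r * (1 + X) := calc
    X = ∑ j ∈ N, ∫ ω, (S j).indicator (G j) ω ∂μ := integral_finsetSum N fun j _ => hTint j
    _ ≤ ∑ j ∈ N, r * ∫ ω, G j ω ∂μ := Finset.sum_le_sum fun j _ =>
        integral_indicator_le_mul_integral_of_condExp_le_s15 (h𝓕 j) (hS j) (hGm j) (hGint j) (hG0 j)
          (hGr j)
    _ = r * ∫ ω, ∑ j ∈ N, G j ω ∂μ := by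
        rw [← Finset.mul_sum, integral_finsetSum N fun j _ => hGint j]
    _ ≤ r * ∫ ω, (1 + ∑ j ∈ N, (S j).indicator (G j) ω) ∂μ :=
        mul_le_mul_of_nonneg_left (integral_mono (integrable_finsetSum N fun j _ => hGint j)
          ((integrable_const 1).add (integrable_finsetSum N fun j _ => hTint j)) hsum) hr₀
    _ = r * (1 + X) := by
        rw [integral_add (integrable_const 1) (integrable_finsetSum N fun j _ => hTint j)]
        simp [X]
  rw [le_div_iff₀ (sub_pos.2 hr)]
  linarith

end CondExp

namespace SeqStep

def signCount (s : ℕ → Bool) (b : Bool) (k : ℕ) : ℕ := #{i ∈ Icc 1 k | s i = b}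

noncomputable def stopTime (F : ℕ → ℕ → Prop) (m : ℕ) (s : ℕ → Bool) : ℕ :=
  Nat.findGreatest (fun k => F (signCount s true k) (signCount s false k)) m

def nullNegCount (H0 : Finset ℕ) (s : ℕ → Bool) (k : ℕ) : ℕ := #{i ∈ H0 | i ≤ k ∧ s i = false}

noncomputable def nullShare (F : ℕ → ℕ → Prop) (m : ℕ) (H0 : Finset ℕ) (j : ℕ) (s : ℕ → Bool) :
    ℝ :=
  if j ≤ stopTime F m s then (1 + nullNegCount H0 s (stopTime F m s) : ℝ)⁻¹ else 0

noncomputable def fdp (H0 : Finset ℕ) (s : ℕ → Bool) (k : ℕ) : ℝ :=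
  #{j ∈ H0 | j ≤ k ∧ s j = true} / max (signCount s true k : ℝ) 1

/-- With `τ = q (1 - c) / c` this is SeqStep+'s acceptance test `FDP-hat ≤ q`. -/
def Accepts (τ : ℝ) (pos neg : ℕ) : Prop := (1 + neg : ℝ) / max (pos : ℝ) 1 ≤ τ

variable {F : ℕ → ℕ → Prop} {m : ℕ} {H0 : Finset ℕ}

lemma nullShare_nonneg (j : ℕ) (s : ℕ → Bool) : 0 ≤ nullShare F m H0 j s := by
  unfold nullShare; split_ifs <;> positivity

lemma nullShare_le_one (j : ℕ) (s : ℕ → Bool) : nullShare F m H0 j s ≤ 1 := by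
  unfold nullShare
  split_ifs
  · exact inv_le_one_of_one_le₀ (by simp)
  · exact zero_le_one

lemma stopTime_spec {s : ℕ → Bool} (h : stopTime F m s ≠ 0) :
    F (signCount s true (stopTime F m s)) (signCount s false (stopTime F m s)) :=
  Nat.findGreatest_of_ne_zero (P := fun k => F (signCount s true k) (signCount s false k)) rfl h

lemma card_filter_le_signCount (hH0 : H0 ⊆ Icc 1 m) (s : ℕ → Bool) (b : Bool) (k : ℕ) :
    #{j ∈ H0 | j ≤ k ∧ s j = b} ≤ signCount s b k := card_le_card fun i hi => by
  obtain ⟨hiH, hik, his⟩ := mem_filter.1 hi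
  exact mem_filter.2 ⟨mem_Icc.2 ⟨(mem_Icc.1 (hH0 hiH)).1, hik⟩, his⟩

lemma signCount_update_true {s : ℕ → Bool} {j k : ℕ} (hs : s j = false) (hj : j ∈ Icc 1 k) :
    signCount (update s j true) true k = signCount s true k + 1 := by
  rw [signCount, signCount, ← card_insert_of_notMem (a := j) (by simp [hs])]
  congr 1; ext i; by_cases h : i = j <;> simp_all [update]

lemma signCount_update_false {s : ℕ → Bool} {j k : ℕ} (hs : s j = false) (hj : j ∈ Icc 1 k) :
    signCount (update s j true) false k = signCount s false k - 1 := by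
  rw [signCount, signCount, ← card_erase_of_mem (a := j) (by simp_all)]
  congr 1; ext i; by_cases h : i = j <;> simp_all [update]

lemma signCount_congr {s s' : ℕ → Bool} {k : ℕ} (h : ∀ i ∈ Icc 1 k, s i = s' i) (b : Bool) :
    signCount s b k = signCount s' b k := by
  unfold signCount; congr 1; exact filter_congr fun i hi => by rw [h i hi]

lemma stopTime_update_true {s : ℕ → Bool} {j : ℕ} (hs : s j = false) (hj : 1 ≤ j)
    (hjK : j ≤ stopTime F m (update s j true)) :
    stopTime F m (update s j true) =
      Nat.findGreatest (fun k => F (signCount s true k + 1) (signCount s false k - 1)) m :=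
  Nat.findGreatest_eq_of_iff (fun k hjk _ => by
    rw [signCount_update_true hs (mem_Icc.2 ⟨hj, hjk⟩),
      signCount_update_false hs (mem_Icc.2 ⟨hj, hjk⟩)]) hjK

lemma one_add_nullNegCount_update {s : ℕ → Bool} {j k : ℕ} (hjH : j ∈ H0) (hs : s j = false)
    (hjk : j ≤ k) :
    1 + nullNegCount H0 (update s j true) k = #{i ∈ {i ∈ H0 | s i = false} | i ≤ k} := by
  have hj : j ∈ {i ∈ {i ∈ H0 | s i = false} | i ≤ k} := by simp [hjH, hs, hjk]
  rw [nullNegCount, ← card_erase_add_one hj, add_comm]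
  congr 2; ext i; by_cases h : i = j <;> simp_all [update]; tauto

/-- Flipping the sign of a negative null `j` gives a stopping time that does not depend on `j`
once `j` lies below it, so each share is `1 / #(negative nulls up to that common time)`. -/
theorem sum_nullShare_update_le_one (hH0 : H0 ⊆ Icc 1 m) (s : ℕ → Bool) :
    ∑ j ∈ H0 with s j = false, nullShare F m H0 j (update s j true) ≤ 1 := by
  set N := {j ∈ H0 | s j = false}
  have hterm : ∀ j ∈ N, nullShare F m H0 j (update s j true) =
      if j ≤ stopTime F m (update s j true) then
        (#{i ∈ N | i ≤ stopTime F m (update s j true)} : ℝ)⁻¹ else 0 := by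
    intro j hj
    obtain ⟨hjH, hs⟩ := mem_filter.1 hj
    unfold nullShare
    split_ifs with h
    · rw [← one_add_nullNegCount_update hjH hs h]; push_cast; rfl
    · rfl
  rw [sum_congr rfl hterm]
  refine sum_ite_inv_card_filter_le_one N (fun j => stopTime F m (update s j true))
    (Nat.findGreatest (fun k => F (signCount s true k + 1) (signCount s false k - 1)) m)
    fun j hj h => ?_
  obtain ⟨hjH, hs⟩ := mem_filter.1 hj
  exact stopTime_update_true hs (mem_Icc.1 (hH0 hjH)).1 h

theorem sum_le_one_add_sum_filter_of_le_nullShare (hH0 : H0 ⊆ Icc 1 m) (s : ℕ → Bool) {w : ℕ → ℝ}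
    (hw : ∀ j ∈ H0, s j = false → w j ≤ nullShare F m H0 j (update s j true)) :
    ∑ j ∈ H0, w j ≤ 1 + ∑ j ∈ H0 with s j = true, w j := by
  rw [← sum_filter_add_sum_filter_not H0 (fun j => s j = true), add_comm]
  gcongr
  simp only [Bool.not_eq_true]
  exact (sum_le_sum fun j hj => hw j (mem_filter.1 hj).1 (mem_filter.1 hj).2).trans
    (sum_nullShare_update_le_one hH0 s)

lemma dependsOn_stopTime (F : ℕ → ℕ → Prop) (m : ℕ) : DependsOn (stopTime F m) (Set.Icc 1 m) :=
  fun s s' h => Nat.findGreatest_eq_of_iff (j := 0) (fun k _ hk => by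
    have hss' : ∀ i ∈ Icc 1 k, s i = s' i := fun i hi =>
      h i (Set.mem_Icc.2 ⟨(mem_Icc.1 hi).1, (mem_Icc.1 hi).2.trans hk⟩)
    rw [signCount_congr hss', signCount_congr hss']) (Nat.zero_le _)

lemma dependsOn_nullShare (hH0 : H0 ⊆ Icc 1 m) (j : ℕ) :
    DependsOn (nullShare F m H0 j) (Set.Icc 1 m) := by
  intro s s' h
  have hnull : ∀ k, nullNegCount H0 s k = nullNegCount H0 s' k := fun k => by
    unfold nullNegCount
    congr 1
    exact filter_congr fun i hi => by rw [h i (by simpa using hH0 hi)]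
  simp only [nullShare, dependsOn_stopTime F m h, hnull]

lemma dependsOn_nullShare_update (hH0 : H0 ⊆ Icc 1 m) (j : ℕ) :
    DependsOn (fun s => nullShare F m H0 j (update s j true)) (Set.Icc 1 m \ {j}) := by
  intro s s' h
  refine dependsOn_nullShare hH0 j fun i hi => ?_
  by_cases hij : i = j
  · simp [hij]
  · simp [update, hij, h i ⟨hi, hij⟩]

theorem fdp_stopTime_le (τ : ℝ) (hH0 : H0 ⊆ Icc 1 m) (s : ℕ → Bool) :
    fdp H0 s (stopTime (Accepts τ) m s) ≤
      τ * ∑ j ∈ H0 with s j = true, nullShare (Accepts τ) m H0 j s := by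
  set K := stopTime (Accepts τ) m s
  set V := #{j ∈ H0 | j ≤ K ∧ s j = true}
  set W : ℝ := 1 + nullNegCount H0 s K
  have hsum : ∑ j ∈ H0 with s j = true, nullShare (Accepts τ) m H0 j s = V * W⁻¹ := by
    change ∑ j ∈ H0 with s j = true, (if j ≤ K then W⁻¹ else 0) = V * W⁻¹
    rw [← sum_filter, filter_filter, sum_const, nsmul_eq_mul]
    simp only [V, and_comm]
  rw [fdp, hsum]
  change (V : ℝ) / max (signCount s true K : ℝ) 1 ≤ τ * (V * W⁻¹)
  rcases Nat.eq_zero_or_pos V with hV | hV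
  · simp [hV]
  obtain ⟨j, hj⟩ := card_pos.1 hV
  obtain ⟨hjH, hjK, hjs⟩ := mem_filter.1 hj
  have hK : K ≠ 0 := by have := (mem_Icc.1 (hH0 hjH)).1; omega
  have hpos : (1 : ℝ) ≤ signCount s true K := by
    exact_mod_cast hV.trans_le (card_filter_le_signCount hH0 s true K)
  have hacc : Accepts τ (signCount s true K) (signCount s false K) := stopTime_spec hK
  rw [Accepts, max_eq_left hpos, div_le_iff₀ (by positivity)] at hacc
  have hW : W ≤ τ * signCount s true K := by
    have : (nullNegCount H0 s K : ℝ) ≤ signCount s false K := by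
      exact_mod_cast card_filter_le_signCount hH0 s false K
    simp only [W]; linarith
  rw [max_eq_left hpos, div_le_iff₀ (by positivity), show τ * (V * W⁻¹) * signCount s true K =
    V * (τ * signCount s true K) / W by field_simp, le_div_iff₀ (by positivity)]
  gcongr

lemma fdp_nonneg (s : ℕ → Bool) (k : ℕ) : 0 ≤ fdp H0 s k := by
  unfold fdp; positivity

lemma fdp_le_one (hH0 : H0 ⊆ Icc 1 m) (s : ℕ → Bool) (k : ℕ) : fdp H0 s k ≤ 1 :=
  div_le_one_of_le₀ (le_max_of_le_left (by exact_mod_cast card_filter_le_signCount hH0 s true k))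
    (by positivity)

variable {Ω : Type*} [MeasurableSpace Ω]

noncomputable def signsOf (S : ℕ → Set Ω) (ω : Ω) : ℕ → Bool := fun i => decide (ω ∈ S i)

noncomputable def condProb (μ : Measure Ω) (S : ℕ → Set Ω) (𝓕 : ℕ → MeasurableSpace Ω)
    (j : ℕ) : Ω → ℝ :=
  μ[(S j).indicator (fun _ => (1 : ℝ)) | 𝓕 j]

/-- The share of `j` is computed with the sign of `j` forced to `true`, which makes it a function
of the other signs. -/
noncomputable def looWeight (μ : Measure Ω) (S : ℕ → Set Ω) (𝓕 : ℕ → MeasurableSpace Ω) (r : ℝ)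
    (F : ℕ → ℕ → Prop) (m : ℕ) (H0 : Finset ℕ) (j : ℕ) : Ω → ℝ :=
  {ω | condProb μ S 𝓕 j ω ≤ r}.indicator fun ω =>
    nullShare F m H0 j (update (signsOf S ω) j true)

/-- The paper's `R_δ`. -/
noncomputable def nullRatio (μ : Measure Ω) (S : ℕ → Set Ω) (𝓕 : ℕ → MeasurableSpace Ω) (r : ℝ)
    (F : ℕ → ℕ → Prop) (m : ℕ) (H0 : Finset ℕ) (ω : Ω) : ℝ :=
  ∑ j ∈ H0, (S j).indicator (looWeight μ S 𝓕 r F m H0 j) ω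

variable {μ : Measure Ω} {S : ℕ → Set Ω} {𝓕 : ℕ → MeasurableSpace Ω} {r : ℝ}

lemma looWeight_nonneg (j : ℕ) : 0 ≤ looWeight μ S 𝓕 r F m H0 j :=
  Set.indicator_nonneg fun _ _ => nullShare_nonneg _ _

lemma stronglyMeasurable_looWeight (hH0 : H0 ⊆ Icc 1 m) {j : ℕ}
    (hS𝓕 : ∀ i ∈ Icc 1 m, i ≠ j → MeasurableSet[𝓕 j] (S i)) :
    StronglyMeasurable[𝓕 j] (looWeight μ S 𝓕 r F m H0 j) := by
  refine Measurable.stronglyMeasurable (Measurable.indicator ?_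
    (measurableSet_le stronglyMeasurable_condExp.measurable measurable_const))
  refine measurable_comp_of_dependsOn (Φ := fun s => nullShare F m H0 j (update s j true))
    ((Set.finite_Icc 1 m).sdiff) (fun i hi => ?_) (dependsOn_nullShare_update hH0 j)
  refine measurable_to_bool ?_
  convert hS𝓕 i (by simpa using hi.1) hi.2 using 1
  ext ω; simp [signsOf]

lemma integrable_looWeight (hH0 : H0 ⊆ Icc 1 m) {j : ℕ} (h𝓕 : 𝓕 j ≤ ‹MeasurableSpace Ω›)
    (hS𝓕 : ∀ i ∈ Icc 1 m, i ≠ j → MeasurableSet[𝓕 j] (S i)) [IsFiniteMeasure μ] :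
    Integrable (looWeight μ S 𝓕 r F m H0 j) μ :=
  .of_bound ((stronglyMeasurable_looWeight hH0 hS𝓕).mono h𝓕).aestronglyMeasurable 1
    (Filter.Eventually.of_forall fun ω => by
      rw [Real.norm_of_nonneg (looWeight_nonneg j ω)]
      exact Set.indicator_le' (fun _ _ => nullShare_le_one _ _) (fun _ _ => zero_le_one) ω)

lemma sum_looWeight_le (hH0 : H0 ⊆ Icc 1 m) (ω : Ω) :
    ∑ j ∈ H0, looWeight μ S 𝓕 r F m H0 j ω ≤ 1 + nullRatio μ S 𝓕 r F m H0 ω := by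
  have h := sum_le_one_add_sum_filter_of_le_nullShare hH0 (signsOf S ω)
    (w := fun j => looWeight μ S 𝓕 r F m H0 j ω)
    fun j _ _ => Set.indicator_le_self' (fun _ _ => nullShare_nonneg _ _) ω
  simpa [nullRatio, sum_filter, Set.indicator_apply, signsOf] using h

theorem integral_nullRatio_le [IsProbabilityMeasure μ] (hH0 : H0 ⊆ Icc 1 m) (hr₀ : 0 ≤ r)
    (hr : r < 1) (hS : ∀ j, MeasurableSet (S j)) (h𝓕 : ∀ j, 𝓕 j ≤ ‹MeasurableSpace Ω›)
    (hS𝓕 : ∀ j, ∀ i ∈ Icc 1 m, i ≠ j → MeasurableSet[𝓕 j] (S i)) :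
    ∫ ω, nullRatio μ S 𝓕 r F m H0 ω ∂μ ≤ r / (1 - r) :=
  integral_sum_indicator_le_div H0 hS h𝓕 (fun j => stronglyMeasurable_looWeight hH0 (hS𝓕 j))
    (fun j => integrable_looWeight hH0 (h𝓕 j) (hS𝓕 j)) looWeight_nonneg hr₀ hr
    (fun j ω h => (Set.mem_of_indicator_ne_zero h : ω ∈ {ω | condProb μ S 𝓕 j ω ≤ r}))
    (sum_looWeight_le hH0)

lemma integrable_nullRatio [IsFiniteMeasure μ] (hH0 : H0 ⊆ Icc 1 m)
    (hS : ∀ j, MeasurableSet (S j)) (h𝓕 : ∀ j, 𝓕 j ≤ ‹MeasurableSpace Ω›)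
    (hS𝓕 : ∀ j, ∀ i ∈ Icc 1 m, i ≠ j → MeasurableSet[𝓕 j] (S i)) :
    Integrable (nullRatio μ S 𝓕 r F m H0) μ :=
  integrable_finsetSum H0 fun j _ => (integrable_looWeight hH0 (h𝓕 j) (hS𝓕 j)).indicator (hS j)

lemma nullRatio_eq_of_forall_condProb_le {ω : Ω} (hω : ∀ j ∈ H0, condProb μ S 𝓕 j ω ≤ r) :
    nullRatio μ S 𝓕 r F m H0 ω =
      ∑ j ∈ H0 with signsOf S ω j = true, nullShare F m H0 j (signsOf S ω) := by
  rw [nullRatio, sum_filter]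
  refine sum_congr rfl fun j hj => ?_
  by_cases hωS : ω ∈ S j
  · have hupd : update (signsOf S ω) j true = signsOf S ω := by simp [signsOf, hωS]
    simp [hωS, looWeight, hω j hj, hupd, signsOf]
  · simp [hωS, signsOf]

theorem integral_fdp_le [IsProbabilityMeasure μ] (hH0 : H0 ⊆ Icc 1 m) {τ : ℝ} (hτ : 0 ≤ τ)
    (hr₀ : 0 ≤ r) (hr : r < 1) (hS : ∀ j, MeasurableSet (S j))
    (h𝓕 : ∀ j, 𝓕 j ≤ ‹MeasurableSpace Ω›)
    (hS𝓕 : ∀ j, ∀ i ∈ Icc 1 m, i ≠ j → MeasurableSet[𝓕 j] (S i)) :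
    ∫ ω, fdp H0 (signsOf S ω) (stopTime (Accepts τ) m (signsOf S ω)) ∂μ ≤
      τ * (r / (1 - r)) + (1 - μ.real {ω | ∀ j ∈ H0, condProb μ S 𝓕 j ω ≤ r}) := by
  set E := {ω | ∀ j ∈ H0, condProb μ S 𝓕 j ω ≤ r}
  set R := nullRatio μ S 𝓕 r (Accepts τ) m H0
  have hE : MeasurableSet E := by
    simp only [E, Set.ofPred_forall]
    exact .iInter fun j => .iInter fun _ =>
      measurableSet_le (stronglyMeasurable_condExp.measurable.mono (h𝓕 j) le_rfl) measurable_const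
  have hR : Integrable R μ := integrable_nullRatio hH0 hS h𝓕 hS𝓕
  have hEc : Integrable (Eᶜ.indicator (1 : Ω → ℝ)) μ := (integrable_const 1).indicator hE.compl
  have hfdp : ∀ ω, fdp H0 (signsOf S ω) (stopTime (Accepts τ) m (signsOf S ω)) ≤
      τ * R ω + Eᶜ.indicator 1 ω := fun ω => by
    by_cases hω : ω ∈ E
    · rw [Set.indicator_of_notMem (by simpa using hω), add_zero,
        show R ω = _ from nullRatio_eq_of_forall_condProb_le hω]
      exact fdp_stopTime_le τ hH0 _
    · rw [Set.indicator_of_mem hω, Pi.one_apply]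
      have hR0 : 0 ≤ R ω := sum_nonneg fun j _ =>
        Set.indicator_nonneg (fun ω _ => looWeight_nonneg j ω) ω
      nlinarith [fdp_le_one hH0 (signsOf S ω) (stopTime (Accepts τ) m (signsOf S ω))]
  calc _ ≤ ∫ ω, (τ * R ω + Eᶜ.indicator 1 ω) ∂μ :=
        integral_mono_of_nonneg (.of_forall fun ω => fdp_nonneg _ _)
          ((hR.const_mul τ).add hEc) (.of_forall hfdp)
    _ = τ * ∫ ω, R ω ∂μ + μ.real Eᶜ := by
        rw [integral_add (hR.const_mul τ) hEc,
          integral_const_mul, integral_indicator_one hE.compl]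
    _ ≤ _ := by
        rw [probReal_compl_eq_one_sub hE]
        gcongr
        exact integral_nullRatio_le hH0 hr₀ hr hS h𝓕 hS𝓕

end SeqStep

theorem le_measureReal_of_ae_eq {Ω : Type*} [MeasurableSpace Ω] {μ : Measure Ω}
    [IsFiniteMeasure μ] {E E' : Set Ω} (hE : E =ᵐ[μ] E') {x : ℝ} (h : ENNReal.ofReal x ≤ μ E') :
    x ≤ μ.real E := by
  rwa [measureReal_def, ← ENNReal.ofReal_le_iff_le_toReal (measure_ne_top _ _), measure_congr hE]

lemma measurable_indicatorVector {Ω : Type*} [MeasurableSpace Ω] {pv : ℕ → Ω → ℝ}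
    (hmeas : ∀ j, Measurable (pv j)) (c : ℝ) (I : ℕ → Prop) :
    Measurable fun ω (i : {i // I i}) => if pv i.1 ω ≤ c then (1 : ℝ) else 0 :=
  measurable_pi_lambda _ fun i =>
    Measurable.ite (measurableSet_le (hmeas i) measurable_const) measurable_const measurable_const

lemma measurableSet_comap_indicatorVector {Ω : Type*} (pv : ℕ → Ω → ℝ) (c : ℝ) {I : ℕ → Prop}
    {i : ℕ} (hi : I i) :
    MeasurableSet[MeasurableSpace.comap
      (fun ω (k : {k // I k}) => if pv k.1 ω ≤ c then (1 : ℝ) else 0) inferInstance]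
      {ω | pv i ω ≤ c} := by
  refine ⟨{v | v ⟨i, hi⟩ = 1}, measurableSet_eq_fun (measurable_pi_apply _) measurable_const, ?_⟩
  ext ω
  simp only [Set.mem_preimage, Set.mem_ofPred_eq]
  split_ifs with h <;> simp [h]

open SeqStep in
theorem seqstep_fdr_almost_independent_general
    {Ω : Type*} [MeasurableSpace Ω] (μ : Measure Ω) [IsProbabilityMeasure μ]
    (m : ℕ) (c q δ ε : ℝ)
    (hc : 0 < c) (hc1 : c < 1) (hq : 0 < q)
    (hδ : 0 ≤ δ) (hcδ : c + δ < 1)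
    (pv : ℕ → Ω → ℝ) (hmeas : ∀ j, Measurable (pv j))
    (H0 : Finset ℕ) (hH0 : H0 ⊆ Finset.Icc 1 m)
    (a : ℕ → Ω → ℝ)
    -- `a j` is the conditional probability of `{p_j ≤ c}` given the indicator vector
    -- `1{p_i ≤ c}, i ≠ j`:
    (ha : ∀ j ∈ H0, a j =ᵐ[μ]
      μ[Set.indicator {ω | pv j ω ≤ c} (fun _ => (1 : ℝ)) |
        MeasurableSpace.comap
          (fun ω => fun i : {i // i ∈ Finset.Icc 1 m ∧ i ≠ j} =>
            if pv i.1 ω ≤ c then (1 : ℝ) else 0)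
          inferInstance])
    (hamax : ENNReal.ofReal (1 - ε) ≤ μ {ω | ∀ j ∈ H0, a j ω ≤ c + δ})
    (khat : Ω → ℕ)
    -- `khat` is the Selective SeqStep+ threshold (pathwise), 0 if no valid k exists:
    (hkhat : ∀ ω, khat ω ≤ m ∧
      (khat ω = 0 ∨
        (1 + (((Finset.Icc 1 (khat ω)).filter (fun j => c < pv j ω)).card : ℝ)) /
            max (((Finset.Icc 1 (khat ω)).filter (fun j => pv j ω ≤ c)).card : ℝ) 1 ≤
          (1 - c) / c * q) ∧
      ∀ k, 1 ≤ k → k ≤ m →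
        (1 + (((Finset.Icc 1 k).filter (fun j => c < pv j ω)).card : ℝ)) /
            max (((Finset.Icc 1 k).filter (fun j => pv j ω ≤ c)).card : ℝ) 1 ≤
          (1 - c) / c * q → k ≤ khat ω) :
    -- FDR = E[ #(null rejections) / (#(rejections) ∨ 1) ]
    ∫ ω, (((H0.filter (fun j => j ≤ khat ω ∧ pv j ω ≤ c)).card : ℝ) /
        max (((Finset.Icc 1 (khat ω)).filter (fun j => pv j ω ≤ c)).card : ℝ) 1) ∂μ ≤
      q * ((c + δ) / c) * ((1 - c) / (1 - c - δ)) + ε := by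
  set τ := (1 - c) / c * q
  set S : ℕ → Set Ω := fun i => {ω | pv i ω ≤ c}
  set 𝓕 : ℕ → MeasurableSpace Ω := fun j => MeasurableSpace.comap
    (fun ω (i : {i // i ∈ Icc 1 m ∧ i ≠ j}) => if pv i.1 ω ≤ c then (1 : ℝ) else 0) inferInstance
  have hK : ∀ ω, stopTime (Accepts τ) m (signsOf S ω) = khat ω := fun ω => by
    obtain ⟨hle, hacc, hmax⟩ := hkhat ω
    refine Nat.findGreatest_eq_of_forall_le hle ?_ ?_ <;>
      simpa [signsOf, S, signCount, Accepts, not_le]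
  have hae : {ω | ∀ j ∈ H0, condProb μ S 𝓕 j ω ≤ c + δ} =ᵐ[μ]
      {ω | ∀ j ∈ H0, a j ω ≤ c + δ} := by
    refine Filter.Eventually.set_eq ?_
    filter_upwards [(Filter.eventually_all_finset H0).2 ha] with ω hω
    exact forall₂_congr fun j hj => by rw [hω j hj]; rfl
  calc _ = ∫ ω, fdp H0 (signsOf S ω) (stopTime (Accepts τ) m (signsOf S ω)) ∂μ := by
        refine integral_congr_ae (.of_forall fun ω => ?_)
        simp only [hK]
        simp [fdp, signsOf, S, signCount]
    _ ≤ τ * ((c + δ) / (1 - (c + δ))) +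
          (1 - μ.real {ω | ∀ j ∈ H0, condProb μ S 𝓕 j ω ≤ c + δ}) :=
        integral_fdp_le hH0 (mul_nonneg (div_nonneg (sub_nonneg.2 hc1.le) hc.le) hq.le)
          (by positivity) hcδ
          (fun j => measurableSet_le (hmeas j) measurable_const)
          (fun j => (measurable_indicatorVector hmeas c _).comap_le)
          (fun j i hi hij => measurableSet_comap_indicatorVector pv c ⟨hi, hij⟩)
    _ ≤ _ := by
        have : τ * ((c + δ) / (1 - (c + δ))) = q * ((c + δ) / c) * ((1 - c) / (1 - c - δ)) := by
          have : 1 - c - δ ≠ 0 := by linarith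
          rw [show 1 - (c + δ) = 1 - c - δ by ring]
          simp only [τ]
          field_simp
        linarith [le_measureReal_of_ae_eq hae hamax]

/-- Theorem 2.1 (almost independent p-values): if
`a_j = P(p_j ≤ c | 1{p_{-j} ≤ c})` satisfies `P(max_{j ∈ H₀} a_j ≤ c + δ) ≥ 1 - ε`
with `c + δ < 1`, then Selective SeqStep+ at level `q` satisfies
`FDR ≤ q ((c+δ)/c) ((1-c)/(1-c-δ)) + ε`. -/
theorem seqstep_fdr_almost_independent
    {Ω : Type*} [MeasurableSpace Ω] (μ : Measure Ω) [IsProbabilityMeasure μ]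
    (m : ℕ) (c q δ ε : ℝ)
    (hc : 0 < c) (hc1 : c < 1) (hq : 0 < q) (hq1 : q < 1)
    (hδ : 0 ≤ δ) (hε : 0 ≤ ε) (hcδ : c + δ < 1)
    (pv : ℕ → Ω → ℝ) (hmeas : ∀ j, Measurable (pv j))
    (H0 : Finset ℕ) (hH0 : H0 ⊆ Finset.Icc 1 m)
    (a : ℕ → Ω → ℝ) (hameas : ∀ j, Measurable (a j))
    -- `a j` is the conditional probability of `{p_j ≤ c}` given the indicator vector
    -- `1{p_i ≤ c}, i ≠ j`:
    (ha : ∀ j ∈ H0, a j =ᵐ[μ]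
      μ[Set.indicator {ω | pv j ω ≤ c} (fun _ => (1 : ℝ)) |
        MeasurableSpace.comap
          (fun ω => fun i : {i // i ∈ Finset.Icc 1 m ∧ i ≠ j} =>
            if pv i.1 ω ≤ c then (1 : ℝ) else 0)
          inferInstance])
    (hamax : ENNReal.ofReal (1 - ε) ≤ μ {ω | ∀ j ∈ H0, a j ω ≤ c + δ})
    (khat : Ω → ℕ) (hkmeas : Measurable khat)
    -- `khat` is the Selective SeqStep+ threshold (pathwise), 0 if no valid k exists:
    (hkhat : ∀ ω, khat ω ≤ m ∧
      (khat ω = 0 ∨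
        (1 + (((Finset.Icc 1 (khat ω)).filter (fun j => c < pv j ω)).card : ℝ)) /
            max (((Finset.Icc 1 (khat ω)).filter (fun j => pv j ω ≤ c)).card : ℝ) 1 ≤
          (1 - c) / c * q) ∧
      ∀ k, 1 ≤ k → k ≤ m →
        (1 + (((Finset.Icc 1 k).filter (fun j => c < pv j ω)).card : ℝ)) /
            max (((Finset.Icc 1 k).filter (fun j => pv j ω ≤ c)).card : ℝ) 1 ≤
          (1 - c) / c * q → k ≤ khat ω) :
    -- FDR = E[ #(null rejections) / (#(rejections) ∨ 1) ]
    ∫ ω, (((H0.filter (fun j => j ≤ khat ω ∧ pv j ω ≤ c)).card : ℝ) /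
        max (((Finset.Icc 1 (khat ω)).filter (fun j => pv j ω ≤ c)).card : ℝ) 1) ∂μ ≤
      q * ((c + δ) / c) * ((1 - c) / (1 - c - δ)) + ε :=
  seqstep_fdr_almost_independent_general μ m c q δ ε hc hc1 hq hδ hcδ pv hmeas H0 hH0 a ha hamax
    khat hkhat
end

section
/- Let $\mathbf{1}\{p_1 \leq c\}, \dots, \mathbf{1}\{p_{n_0} \leq c\}$ be the indicators from the mixture construction: with probability $\pi_1$, a uniformly random subset of size $m_1$ of $\{1, \dots, n_0\}$ has indicator 1 and the rest 0; with probability $\pi_2 = 1 - \pi_1$, a uniformly random subset of size $m_2$ has indicator 1 and the rest 0. Then for $i \neq j$, $\mathrm{Corr}(\mathbf{1}\{p_i \leq c\}, \mathbf{1}\{p_j \leq c\}) = \frac{(m_2 - m_1)^2 \pi_1 \pi_2}{n_0 (n_0 - 1) \mathrm{Var}(\mathbf{1}\{p_i \leq c\})} - \frac{1}{n_0 - 1}$, where $\mathrm{Var}(\mathbf{1}\{p_i \leq c\}) = \bar{c}(1 - \bar{c})$ with $\bar{c} = (m_1 \pi_1 + m_2 \pi_2)/n_0$. -/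
/-!
A uniformly random `m`-subset of an `n`-set contains a fixed `k`-set with probability
`C(m,k)/C(n,k)`. For `k = 0, 1, 2` this gives the total mass, the mean `c̄` and the joint
inclusion probability `(π₁m₁(m₁-1) + π₂m₂(m₂-1))/(n(n-1))` of the mixture. Indicators are
idempotent, so the variance is `c̄(1-c̄)`, and the covariance is the joint probability minus `c̄²`,
which rearranges to the stated formula via `π₁m₁² + π₂m₂² - (π₁m₁ + π₂m₂)² = π₁π₂(m₂-m₁)²`.
-/

open Finset

theorem sum_mul_sub_mul_sub {ι R : Type*} [CommRing R] (s : Finset ι) {w f g : ι → R} {a b : R}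
    (hw : ∑ x ∈ s, w x = 1) (hf : ∑ x ∈ s, w x * f x = a) (hg : ∑ x ∈ s, w x * g x = b) :
    ∑ x ∈ s, w x * ((f x - a) * (g x - b)) = ∑ x ∈ s, w x * (f x * g x) - a * b := by
  have hexpand : ∀ x, w x * ((f x - a) * (g x - b)) =
      w x * (f x * g x) - b * (w x * f x) - a * (w x * g x) + a * b * w x := fun x => by ring
  simp only [hexpand, sum_add_distrib, sum_sub_distrib, ← mul_sum, hw, hf, hg]
  ring

theorem card_filter_powersetCard_subset_mul_choose {α : Type*} [DecidableEq α] {s t : Finset α}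
    (hts : t ⊆ s) (m : ℕ) :
    #{S ∈ s.powersetCard m | t ⊆ S} * (#s).choose #t = (#s).choose m * m.choose #t := by
  by_cases htm : #t ≤ m
  · rw [card_filter_powersetCard_subset t s m hts htm, Nat.choose_mul htm, mul_comm]
  · have hempty : {S ∈ s.powersetCard m | t ⊆ S} = ∅ :=
      filter_eq_empty_iff.mpr fun S hS htS =>
        htm ((card_le_card htS).trans (mem_powersetCard.mp hS).2.le)
    rw [hempty, Nat.choose_eq_zero_of_lt (not_le.mp htm)]
    simp

section UniformSubset

variable (α : Type*) [Fintype α]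

noncomputable def uniformSubsetWeight (m : ℕ) (S : Finset α) : ℝ :=
  if #S = m then 1 / ((Fintype.card α).choose m : ℝ) else 0

theorem uniformSubsetWeight_fin (n m : ℕ) (S : Finset (Fin n)) :
    uniformSubsetWeight (Fin n) m S = if #S = m then 1 / (n.choose m : ℝ) else 0 := by
  rw [uniformSubsetWeight, Fintype.card_fin]

noncomputable def subsetMixtureWeight (π : ℝ) (m₁ m₂ : ℕ) (S : Finset α) : ℝ :=
  π * uniformSubsetWeight α m₁ S + (1 - π) * uniformSubsetWeight α m₂ S

theorem subsetMixtureWeight_fin (n : ℕ) (π : ℝ) (m₁ m₂ : ℕ) (S : Finset (Fin n)) :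
    subsetMixtureWeight (Fin n) π m₁ m₂ S =
      π * (if #S = m₁ then 1 / (n.choose m₁ : ℝ) else 0) +
        (1 - π) * (if #S = m₂ then 1 / (n.choose m₂ : ℝ) else 0) := by
  rw [subsetMixtureWeight, uniformSubsetWeight_fin, uniformSubsetWeight_fin]

variable {α} [DecidableEq α]

theorem sum_uniformSubsetWeight_mul_indicator_subset {m : ℕ} (hm : m ≤ Fintype.card α)
    (t : Finset α) :
    ∑ S, uniformSubsetWeight α m S * (if t ⊆ S then 1 else 0) =
      (m.choose #t : ℝ) / (Fintype.card α).choose #t := by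
  have hcount := card_filter_powersetCard_subset_mul_choose (subset_univ t) m
  rw [card_univ] at hcount
  have hm' : ((Fintype.card α).choose m : ℝ) ≠ 0 := by exact_mod_cast (Nat.choose_pos hm).ne'
  have ht : ((Fintype.card α).choose #t : ℝ) ≠ 0 := by
    exact_mod_cast (Nat.choose_pos (card_le_univ t)).ne'
  simp only [uniformSubsetWeight, ite_zero_mul_ite_zero, mul_one]
  rw [← sum_filter, sum_const, nsmul_eq_mul, ← filter_filter, univ_filter_card_eq]
  field_simp
  exact_mod_cast hcount

variable (π : ℝ) {m₁ m₂ : ℕ}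

theorem sum_subsetMixtureWeight_mul_indicator_subset (hm₁ : m₁ ≤ Fintype.card α)
    (hm₂ : m₂ ≤ Fintype.card α) (t : Finset α) :
    ∑ S, subsetMixtureWeight α π m₁ m₂ S * (if t ⊆ S then 1 else 0) =
      (π * m₁.choose #t + (1 - π) * m₂.choose #t) / (Fintype.card α).choose #t := by
  simp only [subsetMixtureWeight, add_mul, mul_assoc, sum_add_distrib, ← mul_sum,
    sum_uniformSubsetWeight_mul_indicator_subset hm₁,
    sum_uniformSubsetWeight_mul_indicator_subset hm₂]
  ring

theorem sum_subsetMixtureWeight (hm₁ : m₁ ≤ Fintype.card α) (hm₂ : m₂ ≤ Fintype.card α) :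
    ∑ S, subsetMixtureWeight α π m₁ m₂ S = 1 := by
  simpa using sum_subsetMixtureWeight_mul_indicator_subset π hm₁ hm₂ ∅

theorem sum_subsetMixtureWeight_mul_indicator_mem (hm₁ : m₁ ≤ Fintype.card α)
    (hm₂ : m₂ ≤ Fintype.card α) (k : α) :
    ∑ S, subsetMixtureWeight α π m₁ m₂ S * (if k ∈ S then 1 else 0) =
      (π * m₁ + (1 - π) * m₂) / Fintype.card α := by
  simpa using sum_subsetMixtureWeight_mul_indicator_subset π hm₁ hm₂ {k}

theorem sum_subsetMixtureWeight_mul_indicator_mem_mul_indicator_mem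
    (hm₁ : m₁ ≤ Fintype.card α) (hm₂ : m₂ ≤ Fintype.card α) {i j : α} (hij : i ≠ j) :
    ∑ S, subsetMixtureWeight α π m₁ m₂ S * ((if i ∈ S then 1 else 0) * (if j ∈ S then 1 else 0)) =
      (π * (m₁ * (m₁ - 1)) + (1 - π) * (m₂ * (m₂ - 1))) /
        (Fintype.card α * (Fintype.card α - 1)) := by
  have h := sum_subsetMixtureWeight_mul_indicator_subset π hm₁ hm₂ {i, j}
  simp only [insert_subset_iff, singleton_subset_iff, card_pair hij, Nat.cast_choose_two] at h
  simp only [ite_zero_mul_ite_zero, mul_one, h]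
  field_simp

end UniformSubset

theorem random_subset_mixture_correlation_general
    (n0 : ℕ) (hn0 : 2 ≤ n0) (m1 m2 : ℕ) (hm1 : m1 ≤ n0) (hm2 : m2 ≤ n0)
    (π1 : ℝ) (i j : Fin n0) (hij : i ≠ j) :
    -- mixture weight of a subset S:
    (∑ S : Finset (Fin n0),
        (π1 * (if S.card = m1 then 1 / (n0.choose m1 : ℝ) else 0) +
          (1 - π1) * (if S.card = m2 then 1 / (n0.choose m2 : ℝ) else 0)) *
        ((if i ∈ S then (1 : ℝ) else 0) - ((m1 : ℝ) * π1 + m2 * (1 - π1)) / n0) ^ 2 =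
      (((m1 : ℝ) * π1 + m2 * (1 - π1)) / n0) *
        (1 - ((m1 : ℝ) * π1 + m2 * (1 - π1)) / n0)) ∧
    ((((m1 : ℝ) * π1 + m2 * (1 - π1)) / n0) *
        (1 - ((m1 : ℝ) * π1 + m2 * (1 - π1)) / n0) ≠ 0 →
      (∑ S : Finset (Fin n0),
          (π1 * (if S.card = m1 then 1 / (n0.choose m1 : ℝ) else 0) +
            (1 - π1) * (if S.card = m2 then 1 / (n0.choose m2 : ℝ) else 0)) *
          (((if i ∈ S then (1 : ℝ) else 0) - ((m1 : ℝ) * π1 + m2 * (1 - π1)) / n0) *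
            ((if j ∈ S then (1 : ℝ) else 0) - ((m1 : ℝ) * π1 + m2 * (1 - π1)) / n0))) /
        ((((m1 : ℝ) * π1 + m2 * (1 - π1)) / n0) *
          (1 - ((m1 : ℝ) * π1 + m2 * (1 - π1)) / n0)) =
      ((m2 : ℝ) - m1) ^ 2 * π1 * (1 - π1) /
          ((n0 : ℝ) * ((n0 : ℝ) - 1) *
            ((((m1 : ℝ) * π1 + m2 * (1 - π1)) / n0) *
              (1 - ((m1 : ℝ) * π1 + m2 * (1 - π1)) / n0))) -
        1 / ((n0 : ℝ) - 1)) := by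
  simp only [← subsetMixtureWeight_fin]
  set c : ℝ := ((m1 : ℝ) * π1 + m2 * (1 - π1)) / n0
  have hm1' := hm1.trans_eq (Fintype.card_fin n0).symm
  have hm2' := hm2.trans_eq (Fintype.card_fin n0).symm
  have mass := sum_subsetMixtureWeight π1 hm1' hm2'
  have mean (k : Fin n0) :
      ∑ S, subsetMixtureWeight (Fin n0) π1 m1 m2 S * (if k ∈ S then 1 else 0) = c := by
    rw [sum_subsetMixtureWeight_mul_indicator_mem π1 hm1' hm2', Fintype.card_fin]
    ring
  have joint := sum_subsetMixtureWeight_mul_indicator_mem_mul_indicator_mem π1 hm1' hm2' hij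
  rw [Fintype.card_fin] at joint
  have hn : (2 : ℝ) ≤ n0 := by exact_mod_cast hn0
  refine ⟨?_, fun hV => ?_⟩
  · simp only [sq, sum_mul_sub_mul_sub _ mass (mean i) (mean i), ite_zero_mul_ite_zero, and_self,
      mul_one, mean i]
    ring
  · have hn1 : (n0 : ℝ) - 1 ≠ 0 := by linarith
    have hcov : (π1 * (m1 * (m1 - 1)) + (1 - π1) * (m2 * (m2 - 1))) / (n0 * (n0 - 1)) - c * c =
        ((m2 : ℝ) - m1) ^ 2 * π1 * (1 - π1) / (n0 * (n0 - 1)) - c * (1 - c) / (n0 - 1) := by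
      simp only [c]
      field_simp
      ring
    obtain ⟨hc0, hc1⟩ := mul_ne_zero_iff.mp hV
    rw [sum_mul_sub_mul_sub _ mass (mean i) (mean j), joint, hcov]
    field_simp

/-- Exact correlation formula for the two-level random-subset mixture: with probability
`π₁` a uniformly random subset of size `m₁` of `{1,...,n₀}` has indicator 1 (the rest 0),
and with probability `π₂ = 1 - π₁` a uniformly random subset of size `m₂` does. Then the
indicator variance is `c̄(1-c̄)` with `c̄ = (m₁π₁ + m₂π₂)/n₀`, and for `i ≠ j`,
`Corr(X_i, X_j) = (m₂-m₁)²π₁π₂/(n₀(n₀-1)Var) - 1/(n₀-1)`. -/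
theorem random_subset_mixture_correlation
    (n0 : ℕ) (hn0 : 2 ≤ n0) (m1 m2 : ℕ) (hm1 : m1 ≤ n0) (hm2 : m2 ≤ n0)
    (π1 : ℝ) (hπ1 : 0 ≤ π1) (hπ1' : π1 ≤ 1) (i j : Fin n0) (hij : i ≠ j) :
    -- mixture weight of a subset S:
    (∑ S : Finset (Fin n0),
        (π1 * (if S.card = m1 then 1 / (n0.choose m1 : ℝ) else 0) +
          (1 - π1) * (if S.card = m2 then 1 / (n0.choose m2 : ℝ) else 0)) *
        ((if i ∈ S then (1 : ℝ) else 0) - ((m1 : ℝ) * π1 + m2 * (1 - π1)) / n0) ^ 2 =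
      (((m1 : ℝ) * π1 + m2 * (1 - π1)) / n0) *
        (1 - ((m1 : ℝ) * π1 + m2 * (1 - π1)) / n0)) ∧
    ((((m1 : ℝ) * π1 + m2 * (1 - π1)) / n0) *
        (1 - ((m1 : ℝ) * π1 + m2 * (1 - π1)) / n0) ≠ 0 →
      (∑ S : Finset (Fin n0),
          (π1 * (if S.card = m1 then 1 / (n0.choose m1 : ℝ) else 0) +
            (1 - π1) * (if S.card = m2 then 1 / (n0.choose m2 : ℝ) else 0)) *
          (((if i ∈ S then (1 : ℝ) else 0) - ((m1 : ℝ) * π1 + m2 * (1 - π1)) / n0) *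
            ((if j ∈ S then (1 : ℝ) else 0) - ((m1 : ℝ) * π1 + m2 * (1 - π1)) / n0))) /
        ((((m1 : ℝ) * π1 + m2 * (1 - π1)) / n0) *
          (1 - ((m1 : ℝ) * π1 + m2 * (1 - π1)) / n0)) =
      ((m2 : ℝ) - m1) ^ 2 * π1 * (1 - π1) /
          ((n0 : ℝ) * ((n0 : ℝ) - 1) *
            ((((m1 : ℝ) * π1 + m2 * (1 - π1)) / n0) *
              (1 - ((m1 : ℝ) * π1 + m2 * (1 - π1)) / n0))) -
        1 / ((n0 : ℝ) - 1)) :=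
  random_subset_mixture_correlation_general n0 hn0 m1 m2 hm1 hm2 π1 i j hij
end

section
/- Fix $c, q, \rho$ with $0 < c < 1$, $0 < q < 1$, $0 \leq \rho$, and suppose $\rho \leq \frac{c(1-q)}{q + c(1-q)}$. Set $\alpha = \frac{c}{q + c(1-q)}$, $\beta = \frac{c + (1-c)q}{(1-c)(1-q)}$, $\delta = \rho \frac{c(1-q) + q}{c(1-q)}$. Then $q + \frac{\delta}{1 + \beta\delta}\left[\frac{c}{1-c} - \frac{c - c\delta}{1 - (c - c\delta)} q\right] \leq q + c(1-q)$, i.e., the correlation-dependent FDR bound is at most the worst-case exchangeable bound, with equality at $\rho = \frac{c(1-q)}{q + c(1-q)}$. -/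
/-! With `δ = ρ (c(1-q) + q) / (c(1-q))`, the hypothesis on `ρ` says exactly `δ ≤ 1`, and the gap
between the two bounds factors as
`c(1-q) - ε = c (1-δ) ((1-q)(1-c+cδ) + qδ) / ((1-c+cδ)(1+βδ))`,
which is nonnegative for `0 ≤ δ ≤ 1` and vanishes at `δ = 1`. -/

/-- The first argument of the minimum defining `ε(c, q, ρ)`, as a function of `δ`. -/
noncomputable def fdrInflation (c q δ : ℝ) : ℝ :=
  δ / (1 + (c + (1 - c) * q) / ((1 - c) * (1 - q)) * δ) *
    (c / (1 - c) - (c - c * δ) / (1 - (c - c * δ)) * q)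

section

variable {c q δ : ℝ}

theorem sub_fdrInflation (hc : 0 < c) (hc1 : c < 1) (hq : 0 ≤ q) (hq1 : q < 1) (hδ : 0 ≤ δ) :
    c * (1 - q) - fdrInflation c q δ =
      c * (1 - δ) * ((1 - q) * (1 - c + c * δ) + q * δ) /
        ((1 - c + c * δ) * (1 + (c + (1 - c) * q) / ((1 - c) * (1 - q)) * δ)) := by
  have hc' : 0 < 1 - c := by linarith
  have hq' : 0 < 1 - q := by linarith
  have hE : 1 - (c - c * δ) = 1 - c + c * δ := by ring
  have hE0 : 0 < 1 - c + c * δ := by positivity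
  have hβ : 0 < 1 + (c + (1 - c) * q) / ((1 - c) * (1 - q)) * δ := by positivity
  rw [fdrInflation, hE]
  field_simp
  ring

theorem fdrInflation_le (hc : 0 < c) (hc1 : c < 1) (hq : 0 ≤ q) (hq1 : q < 1) (hδ : 0 ≤ δ)
    (hδ1 : δ ≤ 1) : fdrInflation c q δ ≤ c * (1 - q) := by
  have hc' : 0 < 1 - c := by linarith
  have hq' : 0 < 1 - q := by linarith
  have hδ' : 0 ≤ 1 - δ := by linarith
  rw [← sub_nonneg, sub_fdrInflation hc hc1 hq hq1 hδ]
  positivity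

theorem fdrInflation_one (hc : 0 < c) (hc1 : c < 1) (hq : 0 ≤ q) (hq1 : q < 1) :
    fdrInflation c q 1 = c * (1 - q) := by
  rw [eq_comm, ← sub_eq_zero, sub_fdrInflation hc hc1 hq hq1 zero_le_one]
  simp

end

theorem mul_add_div_le_one_iff {a b ρ : ℝ} (ha : 0 < a) (hab : 0 < a + b) :
    ρ * (a + b) / a ≤ 1 ↔ ρ ≤ a / (b + a) := by
  rw [div_le_one ha, add_comm b, le_div_iff₀ hab]

/-- Comparison of the correlation-dependent FDR bound with the worst-case exchangeable
bound: with `δ = ρ(c(1-q)+q)/(c(1-q))` and `β = (c+(1-c)q)/((1-c)(1-q))`, if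
`ρ ≤ c(1-q)/(q+c(1-q))` then
`q + (δ/(1+βδ))[c/(1-c) - ((c-cδ)/(1-(c-cδ)))q] ≤ q + c(1-q)`,
with equality at `ρ = c(1-q)/(q+c(1-q))`. -/
theorem fdr_bound_comparison
    (c q ρ : ℝ) (hc : 0 < c) (hc1 : c < 1) (hq : 0 < q) (hq1 : q < 1)
    (hρ : 0 ≤ ρ) (hρle : ρ ≤ c * (1 - q) / (q + c * (1 - q))) :
    (q + (ρ * (c * (1 - q) + q) / (c * (1 - q)) /
          (1 + (c + (1 - c) * q) / ((1 - c) * (1 - q)) *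
            (ρ * (c * (1 - q) + q) / (c * (1 - q))))) *
        (c / (1 - c) -
          (c - c * (ρ * (c * (1 - q) + q) / (c * (1 - q)))) /
            (1 - (c - c * (ρ * (c * (1 - q) + q) / (c * (1 - q))))) * q) ≤
      q + c * (1 - q)) ∧
    (ρ = c * (1 - q) / (q + c * (1 - q)) →
      q + (ρ * (c * (1 - q) + q) / (c * (1 - q)) /
            (1 + (c + (1 - c) * q) / ((1 - c) * (1 - q)) *
              (ρ * (c * (1 - q) + q) / (c * (1 - q))))) *
          (c / (1 - c) -
            (c - c * (ρ * (c * (1 - q) + q) / (c * (1 - q)))) /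
              (1 - (c - c * (ρ * (c * (1 - q) + q) / (c * (1 - q))))) * q) =
        q + c * (1 - q)) := by
  have hcq : 0 < c * (1 - q) := mul_pos hc (by linarith)
  have hcqq : 0 < c * (1 - q) + q := by positivity
  set δ := ρ * (c * (1 - q) + q) / (c * (1 - q)) with hδ
  have hδ0 : 0 ≤ δ := by positivity
  refine ⟨?_, fun hcrit => ?_⟩
  · have hδ1 : δ ≤ 1 := (mul_add_div_le_one_iff hcq hcqq).2 hρle
    exact (add_le_add_iff_left q).2 (fdrInflation_le hc hc1 hq.le hq1 hδ0 hδ1)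
  · have hδ1 : δ = 1 := by
      rw [hδ, hcrit, add_comm q, div_mul_cancel₀ _ hcqq.ne', div_self hcq.ne']
    rw [hδ1]
    exact congrArg (q + ·) (fdrInflation_one hc hc1 hq.le hq1)
end
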